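/- arXiv:2411.10139 — 10 statements merged into one kernel-verified Lean document; each statement's English description precedes it below -/
import Mathlib

section
/- Let X and Y be independent real random variables whose distributions both belong to the class D⁻, and let φ: ℝ² → ℝ be a function that is non-decreasing in each argument (with respect to the componentwise order) and convex. Then the distribution of φ(X,Y) also belongs to D⁻. -/
open MeasureTheory ProbabilityTheory

/-- The distribution (probability measure) `μ` on `ℝ` belongs to the class `D⁻` if for every
`n`, all nonnegative weights `θ` summing to one, and i.i.d. random variables `X i` with
distribution `μ`, one has `X 1 ≤_st ∑ i, θ i * X i` in the usual stochastic order, i.e. the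
cdf `t ↦ P(∑ i, θ i * X i ≤ t)` of the convex combination is pointwise below the common
cdf `t ↦ μ (Iic t)`. -/
def IsDNeg (μ : Measure ℝ) : Prop :=
  ∀ (n : ℕ) (θ : Fin n → ℝ), (∀ i, 0 ≤ θ i) → ∑ i, θ i = 1 →
    ∀ (Ω : Type) [MeasureSpace Ω], IsProbabilityMeasure (ℙ : Measure Ω) →
      ∀ X : Fin n → Ω → ℝ, (∀ i, Measurable (X i)) →
        (∀ i, Measure.map (X i) ℙ = μ) →
        iIndepFun X ℙ →
        ∀ t : ℝ, Measure.map (fun ω => ∑ i, θ i * X i ω) ℙ (Set.Iic t) ≤ μ (Set.Iic t)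

open Set

/-- A lower set in `ℝ` gets smaller measure under cdf-dominance. -/
lemma lowerSet_meas_le {μ ν : Measure ℝ} [IsProbabilityMeasure μ] [IsProbabilityMeasure ν]
    (h : ∀ s : ℝ, ν (Iic s) ≤ μ (Iic s)) {A : Set ℝ} (hA : IsLowerSet A) : ν A ≤ μ A := by
  rcases eq_empty_or_nonempty A with rfl | hne
  · simp
  by_cases hU : A = univ
  · subst hU; simp
  obtain ⟨z, hz⟩ := (ne_univ_iff_exists_notMem A).mp hU
  have hbdd : BddAbove A := ⟨z, fun y hy => by
    by_contra hzy
    exact hz (hA (le_of_not_ge hzy) hy)⟩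
  set a := sSup A with ha
  have hsub1 : A ⊆ Iic a := fun y hy => le_csSup hbdd hy
  have hsub2 : Iio a ⊆ A := fun y hy => by
    obtain ⟨y', hy'A, hyy'⟩ := exists_lt_of_lt_csSup hne hy
    exact hA hyy'.le hy'A
  by_cases haA : a ∈ A
  · have : A = Iic a := Set.Subset.antisymm hsub1 (fun y hy => hA hy haA)
    rw [this]; exact h a
  · have hAeq : A = Iio a := Set.Subset.antisymm
      (fun y hy => lt_of_le_of_ne (hsub1 hy) (ne_of_mem_of_not_mem hy haA)) hsub2
    have hun : Iio a = ⋃ k : ℕ, Iic (a - 1/(k+1)) := by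
      ext y
      simp only [mem_Iio, mem_iUnion, mem_Iic]
      constructor
      · intro hy
        obtain ⟨k, hk⟩ := exists_nat_one_div_lt (sub_pos.mpr hy)
        exact ⟨k, by linarith⟩
      · rintro ⟨k, hk⟩
        have : (0:ℝ) < 1/(k+1) := by positivity
        linarith
    have hmono : Monotone (fun k : ℕ => Iic (a - 1/(k+1) : ℝ)) := by
      intro i j hij
      apply Iic_subset_Iic.mpr
      have h1 : (1:ℝ)/(j+1) ≤ 1/(i+1) := by
        apply one_div_le_one_div_of_le (by positivity)
        have : (i:ℝ) ≤ (j:ℝ) := Nat.cast_le.mpr hij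
        linarith
      linarith
    calc ν A = ν (⋃ k : ℕ, Iic (a - 1/(k+1))) := by rw [hAeq, hun]
      _ = ⨆ k : ℕ, ν (Iic (a - 1/(k+1))) := hmono.directed_le.measure_iUnion
      _ ≤ μ (Iio a) := by
          refine iSup_le fun k => (h _).trans (measure_mono fun y hy => ?_)
          have : (0:ℝ) < 1/(k+1) := by positivity
          simp only [mem_Iic] at hy
          simp only [mem_Iio]; linarith
      _ = μ A := by rw [hAeq]

/-- Under the product of copies of a probability measure, a coordinate has law `μ`. -/
lemma pi_map_eval {n : ℕ} {α : Type*} [MeasurableSpace α] (μ : Measure α)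
    [IsProbabilityMeasure μ] (i : Fin n) :
    Measure.map (fun u : Fin n → α => u i) (Measure.pi fun _ => μ) = μ := by
  ext s hs
  rw [Measure.map_apply (measurable_pi_apply i) hs]
  classical
  have hpre : (fun u : Fin n → α => u i) ⁻¹' s
      = Set.pi Set.univ (fun j => if j = i then s else Set.univ) := by
    ext u
    simp only [mem_preimage, Set.mem_pi, Set.mem_univ, true_implies]
    constructor
    · intro hu j
      split_ifs with hj
      · subst hj; exact hu
      · trivial
    · intro hu
      have := hu i
      rwa [if_pos rfl] at this
  rw [hpre, Measure.pi_pi]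
  rw [Finset.prod_eq_single i (fun j _ hj => by simp [hj]) (by simp)]
  simp

/-- Coordinates are i.i.d. under a product of copies of a probability measure. -/
lemma iIndepFun_eval {n : ℕ} {α : Type*} {mα : MeasurableSpace α} (μ : Measure α)
    [IsProbabilityMeasure μ] :
    iIndepFun (fun i (u : Fin n → α) => u i)
      (Measure.pi fun _ => μ) := by
  rw [iIndepFun_iff_measure_inter_preimage_eq_mul]
  intro S sets hs
  classical
  have h1 : ∀ (T : Finset (Fin n)), (∀ i ∈ T, MeasurableSet (sets i)) →
      Measure.pi (fun _ => μ) (⋂ i ∈ T, (fun u : Fin n → α => u i) ⁻¹' sets i)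
        = ∏ i ∈ T, μ (sets i) := by
    intro T hT
    have hpre : (⋂ i ∈ T, (fun u : Fin n → α => u i) ⁻¹' sets i)
        = Set.pi Set.univ (fun i => if i ∈ T then sets i else Set.univ) := by
      ext u
      simp only [mem_iInter, mem_preimage, Set.mem_pi, Set.mem_univ, true_implies]
      constructor
      · intro h i
        split_ifs with hi
        · exact h i hi
        · trivial
      · intro h i hi
        have := h i
        rwa [if_pos hi] at this
    rw [hpre, Measure.pi_pi]
    calc (∏ i : Fin n, μ (if i ∈ T then sets i else Set.univ))
        = ∏ i ∈ T, μ (if i ∈ T then sets i else Set.univ) :=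
          (Finset.prod_subset (Finset.subset_univ T) (fun x _ hx => by simp [hx])).symm
      _ = ∏ i ∈ T, μ (sets i) := Finset.prod_congr rfl fun i hi => by rw [if_pos hi]
  rw [h1 S hs]
  refine Finset.prod_congr rfl fun i hi => ?_
  have := h1 {i} (by simpa using hs i hi)
  simpa using this.symm

/-- i.i.d. random variables have the product measure as joint law. -/
lemma map_fun_eq_pi {Ω : Type*} [MeasurableSpace Ω] {P : Measure Ω} [IsProbabilityMeasure P]
    {n : ℕ} {α : Type*} {mα : MeasurableSpace α} {μ : Measure α} [SigmaFinite μ]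
    (Z : Fin n → Ω → α) (hm : ∀ i, Measurable (Z i))
    (hmap : ∀ i, Measure.map (Z i) P = μ)
    (hind : iIndepFun Z P) :
    Measure.map (fun ω i => Z i ω) P = Measure.pi (fun _ => μ) := by
  refine (Measure.pi_eq fun s hs => ?_).symm
  rw [Measure.map_apply (measurable_pi_lambda _ hm) (MeasurableSet.univ_pi hs)]
  have hpre : (fun ω i => Z i ω) ⁻¹' (Set.pi Set.univ s) = ⋂ i ∈ Finset.univ, Z i ⁻¹' s i := by
    ext ω; simp [Set.mem_pi]
  rw [hpre, hind.measure_inter_preimage_eq_mul Finset.univ (fun i _ => hs i)]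
  exact Finset.prod_congr rfl fun i _ => by rw [← hmap i, Measure.map_apply (hm i) (hs i)]

lemma dneg_apply {μ : Measure ℝ} [IsProbabilityMeasure μ] (hμ : IsDNeg μ)
    {n : ℕ} {θ : Fin n → ℝ} (h0 : ∀ i, 0 ≤ θ i) (h1 : ∑ i, θ i = 1) (s : ℝ) :
    Measure.map (fun u : Fin n → ℝ => ∑ i, θ i * u i) (Measure.pi fun _ => μ) (Set.Iic s)
      ≤ μ (Set.Iic s) := by
  letI : MeasureSpace (Fin n → ℝ) := ⟨Measure.pi fun _ => μ⟩
  exact hμ n θ h0 h1 (Fin n → ℝ)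
    (inferInstanceAs (IsProbabilityMeasure (Measure.pi fun _ : Fin n => μ)))
    (fun i u => u i) (fun i => measurable_pi_apply i)
    (fun i => pi_map_eval μ i) (iIndepFun_eval μ) s

/-- If `X, Y` are independent real random variables whose distributions belong to `D⁻` and
`φ : ℝ² → ℝ` is non-decreasing (componentwise order) and convex, then the distribution of
`φ (X, Y)` belongs to `D⁻`. -/
theorem stmt0 (Ω : Type) [MeasureSpace Ω] [IsProbabilityMeasure (ℙ : Measure Ω)]
    (X Y : Ω → ℝ) (hX : Measurable X) (hY : Measurable Y)
    (hindep : IndepFun X Y ℙ)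
    (hXD : IsDNeg (Measure.map X ℙ)) (hYD : IsDNeg (Measure.map Y ℙ))
    (φ : ℝ × ℝ → ℝ) (hmono : Monotone φ) (hconv : ConvexOn ℝ Set.univ φ) :
    IsDNeg (Measure.map (fun ω => φ (X ω, Y ω)) ℙ) := by
  classical
  have hφm : Measurable φ := hconv.locallyLipschitz.continuous.measurable
  set μX := Measure.map X ℙ with hμXdef
  set μY := Measure.map Y ℙ with hμYdef
  haveI : IsProbabilityMeasure μX := Measure.isProbabilityMeasure_map hX.aemeasurable
  haveI : IsProbabilityMeasure μY := Measure.isProbabilityMeasure_map hY.aemeasurable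
  have hpair : Measure.map (fun ω => (X ω, Y ω)) ℙ = μX.prod μY :=
    (indepFun_iff_map_prod_eq_prod_map_map hX.aemeasurable hY.aemeasurable).mp hindep
  set μ := Measure.map (fun ω => φ (X ω, Y ω)) ℙ with hμdef
  have hμ : μ = Measure.map φ (μX.prod μY) := by
    rw [hμdef, ← hpair, Measure.map_map hφm (hX.prodMk hY)]
    rfl
  haveI : IsProbabilityMeasure μ :=
    Measure.isProbabilityMeasure_map ((hφm.comp (hX.prodMk hY)).aemeasurable)
  intro n θ hθ0 hθ1 Ω' mΩ' hprob' Z hZm hZmap hZind t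
  haveI := hprob'
  -- abbreviations
  have hsummeas : Measurable (fun v : Fin n → ℝ => ∑ i, θ i * v i) :=
    Finset.measurable_sum _ (fun i _ => (measurable_pi_apply i).const_mul _)
  -- reduce the LHS to the product measure over copies of μ
  have hjoint : Measure.map (fun ω i => Z i ω) ℙ = Measure.pi (fun _ => μ) :=
    map_fun_eq_pi Z hZm hZmap hZind
  have hLHS : Measure.map (fun ω => ∑ i, θ i * Z i ω) ℙ
      = Measure.map (fun v : Fin n → ℝ => ∑ i, θ i * v i) (Measure.pi fun _ => μ) := by
    rw [← hjoint, Measure.map_map hsummeas (measurable_pi_lambda _ hZm)]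
    rfl
  rw [hLHS]
  -- the concrete i.i.d. construction on (Fin n → ℝ × ℝ)
  set P0 : Measure (Fin n → ℝ × ℝ) := Measure.pi (fun _ => μX.prod μY) with hP0
  have hZ'meas : ∀ i, Measurable (fun w : Fin n → ℝ × ℝ => φ (w i)) :=
    fun i => hφm.comp (measurable_pi_apply i)
  have hTφ : Measure.map (fun w : Fin n → ℝ × ℝ => fun i => φ (w i)) P0
      = Measure.pi (fun _ => μ) := by
    refine map_fun_eq_pi (fun i (w : Fin n → ℝ × ℝ) => φ (w i)) hZ'meas (fun i => ?_) ?_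
    · show Measure.map (φ ∘ (fun w : Fin n → ℝ × ℝ => w i)) P0 = μ
      rw [← Measure.map_map hφm (measurable_pi_apply i), hP0, pi_map_eval, hμ]
    · exact (iIndepFun_eval (μX.prod μY)).comp (fun _ => φ) (fun _ => hφm)
  set g : (Fin n → ℝ × ℝ) → ℝ × ℝ :=
    fun w => (∑ i, θ i * (w i).1, ∑ i, θ i * (w i).2) with hg
  have hgmeas : Measurable g :=
    (Finset.measurable_sum _ fun i _ =>
        ((measurable_pi_apply i).fst.const_mul _)).prodMk
      (Finset.measurable_sum _ fun i _ => ((measurable_pi_apply i).snd.const_mul _))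
  set L : Set (ℝ × ℝ) := φ ⁻¹' Set.Iic t with hLdef
  have hLmeas : MeasurableSet L := hφm measurableSet_Iic
  set νX := Measure.map (fun u : Fin n → ℝ => ∑ i, θ i * u i) (Measure.pi fun _ : Fin n => μX)
    with hνX
  set νY := Measure.map (fun u : Fin n → ℝ => ∑ i, θ i * u i) (Measure.pi fun _ : Fin n => μY)
    with hνY
  haveI : IsProbabilityMeasure νX := Measure.isProbabilityMeasure_map hsummeas.aemeasurable
  haveI : IsProbabilityMeasure νY := Measure.isProbabilityMeasure_map hsummeas.aemeasurable
  -- law of (SX, SY)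
  have hprodlaw : νX.prod νY = Measure.map g P0 := by
    have hswap : MeasurePreserving (MeasurableEquiv.arrowProdEquivProdArrow ℝ ℝ (Fin n)) P0
        ((Measure.pi fun _ : Fin n => μX).prod (Measure.pi fun _ : Fin n => μY)) :=
      measurePreserving_arrowProdEquivProdArrow ℝ ℝ (Fin n) (fun _ => μX) (fun _ => μY)
    rw [hνX, hνY, Measure.map_prod_map _ _ hsummeas hsummeas, ← hswap.map_eq,
      Measure.map_map (hsummeas.prodMap hsummeas)
        (MeasurableEquiv.arrowProdEquivProdArrow ℝ ℝ (Fin n)).measurable]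
    rfl
  -- Jensen: pointwise comparison
  have hsub : (fun w : Fin n → ℝ × ℝ => ∑ i, θ i * φ (w i)) ⁻¹' Set.Iic t ⊆ g ⁻¹' L := by
    intro w hw
    have hj : φ (∑ i, θ i • w i) ≤ ∑ i, θ i * φ (w i) :=
      hconv.map_sum_le (fun i _ => hθ0 i) hθ1 (fun i _ => Set.mem_univ _)
    have hsum : (∑ i, θ i • w i) = g w := by
      rw [hg]
      ext
      · simp [Prod.fst_sum, smul_eq_mul]
      · simp [Prod.snd_sum, smul_eq_mul]
    simp only [Set.mem_preimage, Set.mem_Iic] at hw ⊢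
    calc φ (g w) ≤ ∑ i, θ i * φ (w i) := by rw [← hsum]; exact hj
      _ ≤ t := hw
  -- cdf dominance from the D⁻ hypotheses
  have hXb : ∀ s : ℝ, νX (Set.Iic s) ≤ μX (Set.Iic s) := fun s => dneg_apply hXD hθ0 hθ1 s
  have hYb : ∀ s : ℝ, νY (Set.Iic s) ≤ μY (Set.Iic s) := fun s => dneg_apply hYD hθ0 hθ1 s
  -- chain of inequalities
  calc Measure.map (fun v : Fin n → ℝ => ∑ i, θ i * v i) (Measure.pi fun _ => μ) (Set.Iic t)
      = Measure.map (fun w : Fin n → ℝ × ℝ => ∑ i, θ i * φ (w i)) P0 (Set.Iic t) := by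
        rw [← hTφ, Measure.map_map hsummeas (measurable_pi_lambda _ hZ'meas)]
        rfl
    _ = P0 ((fun w : Fin n → ℝ × ℝ => ∑ i, θ i * φ (w i)) ⁻¹' Set.Iic t) := by
        rw [Measure.map_apply (Finset.measurable_sum _ fun i _ => (hZ'meas i).const_mul _)
          measurableSet_Iic]
    _ ≤ P0 (g ⁻¹' L) := measure_mono hsub
    _ = (νX.prod νY) L := by rw [hprodlaw, Measure.map_apply hgmeas hLmeas]
    _ ≤ (νX.prod μY) L := by
        rw [Measure.prod_apply hLmeas, Measure.prod_apply hLmeas]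
        refine lintegral_mono fun x => lowerSet_meas_le hYb ?_
        intro b a hba hmem
        simp only [Set.mem_preimage, Set.mem_Iic] at hmem ⊢
        exact le_trans (hmono (Prod.mk_le_mk.mpr ⟨le_rfl, hba⟩)) hmem
    _ ≤ (μX.prod μY) L := by
        have h1 : (νX.prod μY) L = (μY.prod νX) (Prod.swap ⁻¹' L) := by
          rw [← Measure.prod_swap, Measure.map_apply measurable_swap hLmeas]
        have h2 : (μX.prod μY) L = (μY.prod μX) (Prod.swap ⁻¹' L) := by
          rw [← Measure.prod_swap, Measure.map_apply measurable_swap hLmeas]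
        rw [h1, h2, Measure.prod_apply (measurable_swap hLmeas),
          Measure.prod_apply (measurable_swap hLmeas)]
        refine lintegral_mono fun y => lowerSet_meas_le hXb ?_
        intro b a hba hmem
        simp only [Set.mem_preimage, Prod.swap_prod_mk, Set.mem_Iic] at hmem ⊢
        exact le_trans (hmono (Prod.mk_le_mk.mpr ⟨hba, le_rfl⟩)) hmem
    _ = μ (Set.Iic t) := by rw [hμ, Measure.map_apply hφm measurableSet_Iic]
end

section
/- If X_n, n ∈ ℕ, are real random variables whose distributions belong to the class D⁻, and X_n converges in distribution to a real random variable X, then the distribution of X belongs to D⁻. -/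
open MeasureTheory ProbabilityTheory
open Set Filter Topology
open scoped ENNReal NNReal

noncomputable def cdf' (P : Measure ℝ) (x : ℝ) : ℝ := (P (Set.Iic x)).toReal

noncomputable def qf (P : Measure ℝ) (u : ℝ) : ℝ :=
  if 0 < u ∧ u < 1 then sInf {x | u ≤ cdf' P x} else 0

noncomputable def P01 : Measure ℝ := volume.restrict (Set.Ioo 0 1)

instance : IsProbabilityMeasure P01 := by
  constructor; rw [P01, Measure.restrict_apply_univ, Real.volume_Ioo]; norm_num

section basic
variable (P : Measure ℝ) [IsProbabilityMeasure P]

lemma cdf'_mono : Monotone (cdf' P) := fun a b hab =>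
  ENNReal.toReal_mono (measure_ne_top _ _) (measure_mono (Set.Iic_subset_Iic.2 hab))

lemma exists_cdf'_lt {u : ℝ} (hu0 : 0 < u) : ∃ b : ℝ, cdf' P b < u := by
  have h1 : (⋂ n : ℕ, Set.Iic (-(n:ℝ))) = ∅ := by
    ext y
    simp only [Set.mem_iInter, Set.mem_Iic, Set.mem_empty_iff_false, iff_false, not_forall]
    obtain ⟨n, hn⟩ := exists_nat_gt (-y)
    exact ⟨n, not_le.2 (by linarith)⟩
  have ht := tendsto_measure_iInter_atTop (μ := P) (s := fun n : ℕ => Set.Iic (-(n:ℝ)))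
    (fun n => nullMeasurableSet_Iic)
    (fun a b hab => Set.Iic_subset_Iic.2 (by simp; exact_mod_cast hab))
    ⟨0, measure_ne_top _ _⟩
  rw [h1, measure_empty] at ht
  have : (0:ℝ≥0∞) < ENNReal.ofReal u := ENNReal.ofReal_pos.2 hu0
  obtain ⟨n, hn⟩ := (ht.eventually (eventually_lt_nhds this)).exists
  refine ⟨-(n:ℝ), ?_⟩
  by_contra h
  push_neg at h
  have : ENNReal.ofReal u ≤ P (Set.Iic (-(n:ℝ))) := by
    rw [← ENNReal.ofReal_toReal (measure_ne_top P (Set.Iic (-(n:ℝ))))]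
    exact ENNReal.ofReal_le_ofReal h
  exact absurd (this.trans_lt hn) (lt_irrefl _)

lemma cdf'_tendsto_Iic (x : ℝ) :
    Tendsto (fun n : ℕ => P (Set.Iic (x + 1 / (n + 1)))) atTop (𝓝 (P (Set.Iic x))) := by
  have h1 : (⋂ n : ℕ, Set.Iic (x + 1 / (n + 1))) = Set.Iic x := by
    ext y
    simp only [Set.mem_iInter, Set.mem_Iic]
    constructor
    · intro h
      refine le_of_forall_pos_le_add fun ε hε => ?_
      obtain ⟨n, hn⟩ := exists_nat_one_div_lt hε
      exact (h n).trans (by nlinarith)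
    · intro h n
      have : (0:ℝ) < 1 / (n + 1) := by positivity
      linarith
  have := tendsto_measure_iInter_atTop (μ := P)
    (s := fun n : ℕ => Set.Iic (x + 1 / (n + 1)))
    (fun n => nullMeasurableSet_Iic)
    (fun a b hab => Set.Iic_subset_Iic.2 (by
      have : (1:ℝ) / (b + 1) ≤ 1 / (a + 1) := by
        apply one_div_le_one_div_of_le (by positivity)
        exact_mod_cast by omega
      linarith)) ⟨0, measure_ne_top _ _⟩
  rwa [h1] at this

lemma exists_cdf'_ge {u : ℝ} (hu1 : u < 1) : ∃ x : ℝ, u ≤ cdf' P x := by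
  have h1 : (⋃ n : ℕ, Set.Iic (n : ℝ)) = Set.univ := by
    ext y; simp only [Set.mem_iUnion, Set.mem_Iic, Set.mem_univ, iff_true]
    obtain ⟨n, hn⟩ := exists_nat_ge y
    exact ⟨n, hn⟩
  have ht := tendsto_measure_iUnion_atTop (μ := P) (s := fun n : ℕ => Set.Iic (n : ℝ))
    (fun a b hab => Set.Iic_subset_Iic.2 (by exact_mod_cast hab))
  rw [h1, measure_univ] at ht
  have hlt : ENNReal.ofReal u < 1 := ENNReal.ofReal_lt_one.2 hu1
  obtain ⟨n, hn⟩ := (ht.eventually (eventually_gt_nhds hlt)).exists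
  exact ⟨n, (ENNReal.ofReal_le_iff_le_toReal (measure_ne_top _ _)).1 hn.le⟩

/-- The Galois connection for the quantile function. -/
lemma qf_le_iff {u : ℝ} (hu0 : 0 < u) (hu1 : u < 1) (x : ℝ) :
    qf P u ≤ x ↔ u ≤ cdf' P x := by
  have hS : {y | u ≤ cdf' P y}.Nonempty := exists_cdf'_ge P hu1
  obtain ⟨b, hb⟩ := exists_cdf'_lt P hu0
  have hbdd : BddBelow {y | u ≤ cdf' P y} := by
    refine ⟨b, fun y hy => ?_⟩
    by_contra h
    push_neg at h
    exact absurd ((hy.trans (cdf'_mono P h.le)).trans_lt hb) (lt_irrefl _)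
  rw [qf, if_pos ⟨hu0, hu1⟩]
  constructor
  · intro h
    have key : ∀ n : ℕ, u ≤ cdf' P (x + 1 / (n + 1)) := by
      intro n
      have hpos : (0:ℝ) < 1 / (n + 1) := by positivity
      have : sInf {y | u ≤ cdf' P y} < x + 1 / (n+1) := lt_of_le_of_lt h (by linarith)
      obtain ⟨y, hy, hyx⟩ := (csInf_lt_iff hbdd hS).1 this
      exact hy.trans (cdf'_mono P hyx.le)
    have h2 : ∀ n : ℕ, ENNReal.ofReal u ≤ P (Set.Iic (x + 1 / (n + 1))) := fun n =>
      (ENNReal.ofReal_le_iff_le_toReal (measure_ne_top _ _)).2 (key n)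
    have := ge_of_tendsto (cdf'_tendsto_Iic P x) (Eventually.of_forall h2)
    exact (ENNReal.ofReal_le_iff_le_toReal (measure_ne_top _ _)).1 this
  · intro h
    exact csInf_le hbdd h

lemma le_cdf'_qf {u : ℝ} (hu0 : 0 < u) (hu1 : u < 1) : u ≤ cdf' P (qf P u) :=
  (qf_le_iff P hu0 hu1 _).1 le_rfl

lemma qf_mono_on {u v : ℝ} (hu0 : 0 < u) (hv1 : v < 1) (huv : u ≤ v) :
    qf P u ≤ qf P v := by
  have hv0 : 0 < v := lt_of_lt_of_le hu0 huv
  have hu1 : u < 1 := lt_of_le_of_lt huv hv1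
  exact (qf_le_iff P hu0 hu1 _).2 (huv.trans (le_cdf'_qf P hv0 hv1))

lemma measurable_qf : Measurable (qf P) := by
  apply measurable_of_Iic
  intro x
  have : qf P ⁻¹' Set.Iic x =
      (Set.Ioo 0 1 ∩ Set.Iic (cdf' P x)) ∪ ((Set.Ioo (0:ℝ) 1)ᶜ ∩ {u : ℝ | (0:ℝ) ≤ x}) := by
    ext u
    by_cases h : 0 < u ∧ u < 1
    · simp only [Set.mem_preimage, Set.mem_Iic, Set.mem_union, Set.mem_inter_iff,
        Set.mem_Ioo, Set.mem_compl_iff, Set.mem_setOf_eq]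
      rw [qf_le_iff P h.1 h.2]
      tauto
    · simp only [Set.mem_preimage, Set.mem_Iic, qf, if_neg h, Set.mem_union, Set.mem_inter_iff,
        Set.mem_Ioo, Set.mem_compl_iff, Set.mem_setOf_eq]
      tauto
  rw [this]
  exact ((measurableSet_Ioo.inter measurableSet_Iic).union
    (measurableSet_Ioo.compl.inter (MeasurableSet.const _)))

end basic

section more
variable (P : Measure ℝ) [IsProbabilityMeasure P]

lemma cdf'_nonneg (x : ℝ) : 0 ≤ cdf' P x := ENNReal.toReal_nonneg

lemma cdf'_le_one (x : ℝ) : cdf' P x ≤ 1 := by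
  have h := prob_le_one (μ := P) (s := Set.Iic x)
  calc cdf' P x ≤ (1:ℝ≥0∞).toReal := ENNReal.toReal_mono (by simp) h
  _ = 1 := by simp

lemma map_qf : Measure.map (qf P) P01 = P := by
  haveI : IsProbabilityMeasure (Measure.map (qf P) P01) :=
    Measure.isProbabilityMeasure_map (measurable_qf P).aemeasurable
  refine Measure.ext_of_Iic _ _ (fun x => ?_)
  rw [Measure.map_apply (measurable_qf P) measurableSet_Iic]
  rw [P01, Measure.restrict_apply ((measurable_qf P) measurableSet_Iic)]
  have hkey : qf P ⁻¹' Set.Iic x ∩ Set.Ioo 0 1 =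
      Set.Ioo (0:ℝ) 1 ∩ Set.Iic (cdf' P x) := by
    ext u
    simp only [Set.mem_inter_iff, Set.mem_preimage, Set.mem_Iic, Set.mem_Ioo]
    constructor
    · rintro ⟨h1, h2⟩
      exact ⟨h2, (qf_le_iff P h2.1 h2.2 x).1 h1⟩
    · rintro ⟨h2, h1⟩
      exact ⟨(qf_le_iff P h2.1 h2.2 x).2 h1, h2⟩
  rw [hkey]
  rcases lt_or_ge (cdf' P x) 1 with h | h
  · have : Set.Ioo (0:ℝ) 1 ∩ Set.Iic (cdf' P x) = Set.Ioc 0 (cdf' P x) := by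
      ext u
      simp only [Set.mem_inter_iff, Set.mem_Ioo, Set.mem_Iic, Set.mem_Ioc]
      constructor
      · rintro ⟨⟨h1, _⟩, h3⟩; exact ⟨h1, h3⟩
      · rintro ⟨h1, h3⟩; exact ⟨⟨h1, lt_of_le_of_lt h3 h⟩, h3⟩
    rw [this, Real.volume_Ioc, sub_zero, cdf', ENNReal.ofReal_toReal (measure_ne_top _ _)]
  · have h1 : cdf' P x = 1 := le_antisymm (cdf'_le_one P x) h
    have : Set.Ioo (0:ℝ) 1 ∩ Set.Iic (cdf' P x) = Set.Ioo 0 1 := by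
      rw [Set.inter_eq_left]
      intro u hu
      simp only [Set.mem_Iic]
      rw [h1]; exact hu.2.le
    rw [this, Real.volume_Ioo]
    have : P (Set.Iic x) = 1 := by
      have := congrArg ENNReal.ofReal h1
      rwa [cdf', ENNReal.ofReal_toReal (measure_ne_top _ _), ENNReal.ofReal_one] at this
    rw [this]; norm_num

/-- Pushing a product measure forward componentwise. -/
lemma map_pi_comp {n : ℕ} (Q : Fin n → Measure ℝ) [∀ i, IsProbabilityMeasure (Q i)]
    (f : Fin n → ℝ → ℝ) (hf : ∀ i, Measurable (f i)) :
    Measure.map (fun (u : Fin n → ℝ) (i : Fin n) => f i (u i)) (Measure.pi Q)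
      = Measure.pi (fun i => Measure.map (f i) (Q i)) := by
  haveI : ∀ i, IsProbabilityMeasure (Measure.map (f i) (Q i)) := fun i =>
    Measure.isProbabilityMeasure_map (hf i).aemeasurable
  have hm : Measurable (fun (u : Fin n → ℝ) (i : Fin n) => f i (u i)) :=
    measurable_pi_lambda _ (fun i => (hf i).comp (measurable_pi_apply i))
  refine (Measure.pi_eq fun s hs => ?_).symm
  rw [Measure.map_apply hm (MeasurableSet.univ_pi hs)]
  have : (fun (u : Fin n → ℝ) (i : Fin n) => f i (u i)) ⁻¹' Set.pi Set.univ s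
      = Set.pi Set.univ (fun i => f i ⁻¹' s i) := by
    ext u; simp [Set.mem_pi]
  rw [this, Measure.pi_pi]
  exact Finset.prod_congr rfl fun i _ =>
    (Measure.map_apply (hf i) (hs i)).symm

/-- The coordinate maps under a product measure: law. -/
lemma map_eval_pi' {n : ℕ} (Q : Fin n → Measure ℝ) [∀ i, IsProbabilityMeasure (Q i)] (i : Fin n) :
    Measure.map (fun u : Fin n → ℝ => u i) (Measure.pi Q) = Q i := by
  refine Measure.ext fun s hs => ?_
  rw [Measure.map_apply (measurable_pi_apply i) hs]
  rw [Set.eval_preimage]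
  rw [Measure.pi_pi]
  have hval : ∀ j, Q j (Function.update (fun _ => Set.univ) i s j) = if j = i then Q i s else 1 := by
    intro j
    rcases eq_or_ne j i with rfl | h
    · simp
    · simp [Function.update_of_ne h, h]
  simp only [hval]
  simp

/-- The coordinate maps under a product measure are independent. -/
lemma iIndepFun_eval_pi {n : ℕ} (Q : Fin n → Measure ℝ) [∀ i, IsProbabilityMeasure (Q i)] :
    iIndepFun (fun (i : Fin n) (u : Fin n → ℝ) => u i)
      (Measure.pi Q) := by
  rw [iIndepFun_iff_measure_inter_preimage_eq_mul]
  intro S sets hsets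
  classical
  have h1 : (⋂ i ∈ S, (fun u : Fin n → ℝ => u i) ⁻¹' sets i)
      = Set.pi Set.univ (fun i => if i ∈ S then sets i else Set.univ) := by
    ext u
    simp only [Set.mem_iInter, Set.mem_preimage, Set.mem_pi, Set.mem_univ, true_implies]
    constructor
    · intro h i
      by_cases hi : i ∈ S
      · simpa [hi] using h i hi
      · simp [hi]
    · intro h i hi
      have := h i
      simpa [hi] using this
  rw [h1, Measure.pi_pi]
  have h2 : ∀ i, Q i ((if i ∈ S then sets i else Set.univ)) =
      if i ∈ S then Q i (sets i) else 1 := by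
    intro i; split <;> simp
  calc (∏ i, Q i (if i ∈ S then sets i else Set.univ))
      = ∏ i, (if i ∈ S then Q i (sets i) else 1) := Finset.prod_congr rfl fun i _ => h2 i
    _ = ∏ i ∈ S, Q i (sets i) := by rw [Finset.prod_ite_mem]; simp
    _ = ∏ i ∈ S, Measure.pi Q ((fun u : Fin n → ℝ => u i) ⁻¹' sets i) := by
        refine Finset.prod_congr rfl fun i hi => ?_
        rw [← Measure.map_apply (measurable_pi_apply i) (hsets i hi), map_eval_pi']

/-- Joint law of independent identically-distributed random variables is the product measure. -/
lemma map_joint_eq_pi {n : ℕ} {Ω : Type} [MeasureSpace Ω] [IsProbabilityMeasure (ℙ : Measure Ω)]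
    (X : Fin n → Ω → ℝ) (hXm : ∀ i, Measurable (X i))
    (Q : Measure ℝ) [IsProbabilityMeasure Q] (hlaw : ∀ i, Measure.map (X i) ℙ = Q)
    (hindep : iIndepFun X ℙ) :
    Measure.map (fun ω (i : Fin n) => X i ω) ℙ = Measure.pi (fun _ => Q) := by
  have hm : Measurable (fun ω (i : Fin n) => X i ω) :=
    measurable_pi_lambda _ (fun i => hXm i)
  refine (Measure.pi_eq fun s hs => ?_).symm
  rw [Measure.map_apply hm (MeasurableSet.univ_pi fun i => hs i)]
  have h1 : (fun ω (i : Fin n) => X i ω) ⁻¹' Set.pi Set.univ s = ⋂ i, X i ⁻¹' s i := by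
    ext ω; simp [Set.mem_pi]
  rw [h1, hindep.meas_iInter (fun i => ⟨s i, hs i, rfl⟩)]
  exact Finset.prod_congr rfl fun i _ => by
    rw [← hlaw i, Measure.map_apply (hXm i) (hs i)]

end more

lemma countable_atoms (P : Measure ℝ) [IsProbabilityMeasure P] :
    {x : ℝ | P {x} ≠ 0}.Countable := by
  have h := MeasureTheory.Measure.countable_meas_level_set_pos (μ := P) (g := fun x : ℝ => x)
    measurable_id
  refine h.mono (fun x hx => ?_)
  simp only [Set.mem_setOf_eq] at hx ⊢
  have h2 : {a : ℝ | a = x} = {x} := by ext; simp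
  rw [h2]
  exact pos_iff_ne_zero.mpr hx

lemma exists_nonatom (P : Measure ℝ) [IsProbabilityMeasure P] {a b : ℝ} (h : a < b) :
    ∃ x, a < x ∧ x < b ∧ P {x} = 0 := by
  by_contra hcon
  push_neg at hcon
  have hsub : Set.Ioo a b ⊆ {x : ℝ | P {x} ≠ 0} := fun x hx => hcon x hx.1 hx.2
  have h0 : volume (Set.Ioo a b) = 0 :=
    measure_mono_null hsub ((countable_atoms P).measure_zero _)
  rw [Real.volume_Ioo] at h0
  simp only [ENNReal.ofReal_eq_zero] at h0
  linarith

lemma countable_bad (P : Measure ℝ) [IsProbabilityMeasure P] :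
    {u : ℝ | (0 < u ∧ u < 1) ∧ ∃ ε > 0, ∀ v, u < v → v < 1 → qf P u + ε ≤ qf P v}.Countable := by
  set D := {u : ℝ | (0 < u ∧ u < 1) ∧ ∃ ε > 0, ∀ v, u < v → v < 1 → qf P u + ε ≤ qf P v} with hD
  have hq : ∀ u ∈ D, ∃ q : ℚ, qf P u < (q:ℝ) ∧ ∀ v, u < v → v < 1 → (q:ℝ) < qf P v := by
    rintro u ⟨hu, ε, hε, hv⟩
    obtain ⟨q, hq1, hq2⟩ := exists_rat_btwn (lt_add_of_pos_right (qf P u) hε)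
    exact ⟨q, hq1, fun v huv hv1 => lt_of_lt_of_le hq2 (hv v huv hv1)⟩
  choose! q hq1 hq2 using hq
  have hinj : Set.InjOn q D := by
    intro u hu v hv huv
    by_contra hne
    rcases lt_or_gt_of_ne hne with h | h
    · have h1 : ((q u : ℚ) : ℝ) < qf P v := hq2 u hu v h hv.1.2
      have h2 : qf P v < ((q v : ℚ) : ℝ) := hq1 v hv
      rw [huv] at h1
      exact absurd (h1.trans h2) (lt_irrefl _)
    · have h1 : ((q v : ℚ) : ℝ) < qf P u := hq2 v hv u h hu.1.2
      have h2 : qf P u < ((q u : ℚ) : ℝ) := hq1 u hu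
      rw [huv] at h2
      exact absurd (h1.trans h2) (lt_irrefl _)
  exact Set.countable_of_injective_of_countable_image hinj (Set.to_countable _)

lemma cdf'_conv (μ : ℕ → ProbabilityMeasure ℝ) (ν : ProbabilityMeasure ℝ)
    (hconv : Filter.Tendsto μ Filter.atTop (nhds ν)) {x : ℝ}
    (hx : (ν : Measure ℝ) {x} = 0) :
    Tendsto (fun m => cdf' (μ m : Measure ℝ) x) atTop (𝓝 (cdf' (ν : Measure ℝ) x)) := by
  have h := ProbabilityMeasure.tendsto_measure_of_null_frontier_of_tendsto' hconv
    (E := Set.Iic x) (by rwa [frontier_Iic])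
  exact (ENNReal.tendsto_toReal (measure_ne_top _ _)).comp h

lemma qf_tendsto (μ : ℕ → ProbabilityMeasure ℝ) (ν : ProbabilityMeasure ℝ)
    (hconv : Filter.Tendsto μ Filter.atTop (nhds ν)) {u : ℝ} (hu0 : 0 < u) (hu1 : u < 1)
    (hgood : ∀ ε > 0, ∃ v, u < v ∧ v < 1 ∧ qf (ν : Measure ℝ) v < qf (ν : Measure ℝ) u + ε) :
    Tendsto (fun m => qf (μ m : Measure ℝ) u) atTop (𝓝 (qf (ν : Measure ℝ) u)) := by
  refine tendsto_order.2 ⟨fun b hb => ?_, fun b hb => ?_⟩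
  · -- b < qf ν u, show eventually b < qf (μ m) u
    obtain ⟨x, hx1, hx2, hx0⟩ := exists_nonatom (ν : Measure ℝ) hb
    have hcx : cdf' (ν : Measure ℝ) x < u := by
      by_contra hcon
      push_neg at hcon
      exact absurd ((qf_le_iff (ν : Measure ℝ) hu0 hu1 x).2 hcon) (not_le.2 hx2)
    filter_upwards [(cdf'_conv μ ν hconv hx0).eventually (eventually_lt_nhds hcx)] with m hm
    have : ¬ qf (μ m : Measure ℝ) u ≤ x := by
      rw [qf_le_iff (μ m : Measure ℝ) hu0 hu1 x]
      exact not_le.2 hm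
    exact hx1.trans (not_le.1 this)
  · -- qf ν u < b, show eventually qf (μ m) u < b
    obtain ⟨v, huv, hv1, hqv⟩ := hgood (b - qf (ν : Measure ℝ) u) (by linarith)
    have hv0 : 0 < v := hu0.trans huv
    obtain ⟨x, hx1, hx2, hx0⟩ := exists_nonatom (ν : Measure ℝ) (show qf (ν:Measure ℝ) v < b by linarith)
    have hvc : v ≤ cdf' (ν : Measure ℝ) x := (qf_le_iff (ν : Measure ℝ) hv0 hv1 x).1 hx1.le
    have hcu : u < cdf' (ν : Measure ℝ) x := lt_of_lt_of_le huv hvc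
    filter_upwards [(cdf'_conv μ ν hconv hx0).eventually (eventually_gt_nhds hcu)] with m hm
    have : qf (μ m : Measure ℝ) u ≤ x := (qf_le_iff (μ m : Measure ℝ) hu0 hu1 x).2 hm.le
    exact lt_of_le_of_lt this hx2


/-- If the distributions of real random variables `X n` all belong to `D⁻` and `X n`
converges in distribution (weak convergence of laws) to `X`, then the distribution of `X`
belongs to `D⁻`. -/
theorem stmt1 (μ : ℕ → ProbabilityMeasure ℝ) (ν : ProbabilityMeasure ℝ)
    (hD : ∀ n, IsDNeg (μ n : Measure ℝ))
    (hconv : Filter.Tendsto μ Filter.atTop (nhds ν)) :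
    IsDNeg (ν : Measure ℝ) := by
  intro n θ hθ hθ1 Ω mΩ hP X hXm hXlaw hXindep t
  haveI := hP
  have hsum_m : Measurable (fun x : Fin n → ℝ => ∑ i, θ i * x i) :=
    Finset.measurable_sum _ (fun i _ => (measurable_pi_apply (X := fun _ : Fin n => ℝ) i).const_mul (θ i))
  -- Step 1: the law of the convex combination only depends on the product measure.
  have hjm : Measurable (fun ω (i : Fin n) => X i ω) := measurable_pi_lambda _ (fun i => hXm i)
  have hstep1 : Measure.map (fun ω => ∑ i, θ i * X i ω) ℙ
      = Measure.map (fun x : Fin n → ℝ => ∑ i, θ i * x i)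
          (Measure.pi fun _ : Fin n => (ν : Measure ℝ)) := by
    rw [← map_joint_eq_pi X hXm (ν : Measure ℝ) hXlaw hXindep,
      Measure.map_map hsum_m hjm]
    rfl
  -- Step 2: rewriting via quantile functions
  have hZ : ∀ (Q : Measure ℝ) [IsProbabilityMeasure Q], ∀ (s : Set ℝ), MeasurableSet s →
      Measure.map (fun x : Fin n → ℝ => ∑ i, θ i * x i) (Measure.pi fun _ : Fin n => Q) s
        = Measure.pi (fun _ : Fin n => P01)
            ((fun u : Fin n → ℝ => ∑ i, θ i * qf Q (u i)) ⁻¹' s) := by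
    intro Q hQ s hs
    have h1 : Measure.pi (fun _ : Fin n => Q)
        = Measure.map (fun (u : Fin n → ℝ) (i : Fin n) => qf Q (u i))
            (Measure.pi fun _ : Fin n => P01) := by
      rw [map_pi_comp (fun _ : Fin n => P01) (fun _ => qf Q) (fun _ => measurable_qf Q)]
      simp only [map_qf Q]
    have hqm : Measurable (fun (u : Fin n → ℝ) (i : Fin n) => qf Q (u i)) :=
      measurable_pi_lambda _ (fun i => (measurable_qf Q).comp (measurable_pi_apply i))
    rw [h1, Measure.map_map hsum_m hqm,
      Measure.map_apply (hsum_m.comp hqm) hs]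
    rfl
  rw [hstep1, hZ (ν : Measure ℝ) (Set.Iic t) measurableSet_Iic]
  -- Step 3: the main estimate.
  set Pi0 : Measure (Fin n → ℝ) := Measure.pi (fun _ : Fin n => P01) with hPi0
  set Z : (Fin n → ℝ) → ℝ := fun u => ∑ i, θ i * qf (ν : Measure ℝ) (u i) with hZdef
  refine ENNReal.le_of_forall_pos_le_add fun ε hε _ => ?_
  have hνlt : (ν : Measure ℝ) (Set.Iic t) < (ν : Measure ℝ) (Set.Iic t) + ε :=
    ENNReal.lt_add_right (measure_ne_top _ _) (by exact_mod_cast hε.ne')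
  obtain ⟨k, hk⟩ := ((cdf'_tendsto_Iic (ν : Measure ℝ) t).eventually
    (eventually_lt_nhds hνlt)).exists
  obtain ⟨t', ht'1, ht'2, ht'atom⟩ := exists_nonatom (ν : Measure ℝ)
    (show t < t + 1 / (k + 1) by
      have : (0:ℝ) < 1 / ((k:ℝ) + 1) := by positivity
      linarith)
  -- the claim: Pi0 (Z ⁻¹' Iic t) ≤ ν (Iic t')
  have claim : Pi0 (Z ⁻¹' Set.Iic t) ≤ (ν : Measure ℝ) (Set.Iic t') := by
    -- bound for each m
    have Bm : ∀ m : ℕ,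
        Pi0 ((fun u : Fin n → ℝ => ∑ i, θ i * qf (μ m : Measure ℝ) (u i)) ⁻¹' Set.Iic t')
          ≤ (μ m : Measure ℝ) (Set.Iic t') := by
      intro m
      rw [← hZ (μ m : Measure ℝ) (Set.Iic t') measurableSet_Iic]
      letI mP : MeasureSpace (Fin n → ℝ) := ⟨Measure.pi fun _ : Fin n => (μ m : Measure ℝ)⟩
      exact hD m n θ hθ hθ1 (Fin n → ℝ)
        (by exact (inferInstance : IsProbabilityMeasure (Measure.pi fun _ : Fin n => (μ m : Measure ℝ))))
        (fun i u => u i) (fun i => measurable_pi_apply i)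
        (fun i => map_eval_pi' (fun _ : Fin n => (μ m : Measure ℝ)) i)
        (iIndepFun_eval_pi (fun _ : Fin n => (μ m : Measure ℝ))) t'
    -- the bad set
    set Bad : Set ℝ := {u : ℝ | (0 < u ∧ u < 1) ∧
        ∃ ε > 0, ∀ v, u < v → v < 1 →
          qf (ν : Measure ℝ) u + ε ≤ qf (ν : Measure ℝ) v} with hBad
    have hBadc : Bad.Countable := countable_bad (ν : Measure ℝ)
    set G : Set ℝ := Set.Ioo 0 1 \ Bad with hG
    have hGm : MeasurableSet G := measurableSet_Ioo.diff hBadc.measurableSet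
    set N : Set (Fin n → ℝ) := ⋃ i : Fin n, (fun u : Fin n → ℝ => u i) ⁻¹' Gᶜ with hN
    have hN0 : Pi0 N = 0 := by
      refine measure_iUnion_null fun i => ?_
      rw [← Measure.map_apply (measurable_pi_apply i) hGm.compl,
        map_eval_pi' (fun _ : Fin n => P01) i]
      have hle : P01 Gᶜ ≤ P01 (Set.Ioo 0 1)ᶜ + P01 Bad := by
        refine le_trans (measure_mono ?_) (measure_union_le _ _)
        intro x hx
        simp only [Set.mem_compl_iff, hG, Set.mem_diff, not_and, not_not] at hx
        by_cases h : x ∈ Set.Ioo (0:ℝ) 1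
        · exact Or.inr (hx h)
        · exact Or.inl h
      have h1 : P01 (Set.Ioo (0:ℝ) 1)ᶜ = 0 := by
        rw [P01, Measure.restrict_apply measurableSet_Ioo.compl]
        simp
      have h2 : P01 Bad = 0 :=
        le_antisymm ((Measure.restrict_le_self Bad).trans
          (hBadc.measure_zero volume).le) zero_le
      rw [h1, h2, add_zero] at hle
      exact le_antisymm hle zero_le
    -- the sets A M
    set A : ℕ → Set (Fin n → ℝ) := fun M => ⋂ m, ⋂ (_ : M ≤ m),
        (fun u : Fin n → ℝ => ∑ i, θ i * qf (μ m : Measure ℝ) (u i)) ⁻¹' Set.Iic t' with hA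
    have hAmono : Monotone A := by
      intro M M' hMM' u hu
      simp only [hA, Set.mem_iInter] at hu ⊢
      exact fun m hm => hu m (hMM'.trans hm)
    have hincl : (Z ⁻¹' Set.Iic t) \ N ⊆ ⋃ M, A M := by
      rintro u ⟨huZ, huN⟩
      have huG : ∀ i, u i ∈ G := by
        intro i
        by_contra h
        exact huN (Set.mem_iUnion.2 ⟨i, h⟩)
      have htend : Tendsto (fun m => ∑ i, θ i * qf (μ m : Measure ℝ) (u i)) atTop (𝓝 (Z u)) := by
        apply tendsto_finset_sum
        intro i _
        have hg := huG i
        have h0 : 0 < u i := hg.1.1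
        have h1 : u i < 1 := hg.1.2
        have hgood : ∀ ε' > (0:ℝ), ∃ v, u i < v ∧ v < 1 ∧
            qf (ν : Measure ℝ) v < qf (ν : Measure ℝ) (u i) + ε' := by
          intro ε' hεp
          by_contra hcon
          push_neg at hcon
          exact hg.2 ⟨⟨h0, h1⟩, ε', hεp, fun v hv hv1 => hcon v hv hv1⟩
        exact ((qf_tendsto μ ν hconv h0 h1 hgood).const_mul (θ i))
      have hZlt : Z u < t' := lt_of_le_of_lt huZ ht'1
      obtain ⟨M, hM⟩ := eventually_atTop.1 (htend.eventually (eventually_lt_nhds hZlt))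
      refine Set.mem_iUnion.2 ⟨M, ?_⟩
      simp only [hA, Set.mem_iInter]
      intro m hm
      exact Set.mem_preimage.2 (Set.mem_Iic.2 (hM m hm).le)
    have hdiff : Pi0 (Z ⁻¹' Set.Iic t) = Pi0 ((Z ⁻¹' Set.Iic t) \ N) :=
      (measure_diff_null hN0).symm
    rw [hdiff]
    refine le_trans (measure_mono hincl) ?_
    refine le_of_tendsto (tendsto_measure_iUnion_atTop (μ := Pi0) hAmono)
      (Eventually.of_forall fun M => ?_)
    have hmuconv : Tendsto (fun m => (μ m : Measure ℝ) (Set.Iic t')) atTop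
        (𝓝 ((ν : Measure ℝ) (Set.Iic t'))) :=
      ProbabilityMeasure.tendsto_measure_of_null_frontier_of_tendsto' hconv
        (by rwa [frontier_Iic])
    refine ge_of_tendsto hmuconv ?_
    filter_upwards [eventually_ge_atTop M] with m hm
    refine le_trans (measure_mono ?_) (Bm m)
    intro u hu
    simp only [hA, Set.mem_iInter] at hu
    exact hu m hm
  calc Pi0 (Z ⁻¹' Set.Iic t) ≤ (ν : Measure ℝ) (Set.Iic t') := claim
    _ ≤ (ν : Measure ℝ) (Set.Iic (t + 1 / (k + 1))) :=
        measure_mono (Set.Iic_subset_Iic.2 ht'2.le)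
    _ ≤ (ν : Measure ℝ) (Set.Iic t) + ε := hk.le
end

section
/- If X is a non-degenerate real random variable (its distribution is not a Dirac point mass) whose distribution belongs to the class D⁻, then E|X| = ∞. -/
open MeasureTheory ProbabilityTheory
open scoped ENNReal NNReal

noncomputable def gg (x : ℝ) : ℝ := x + Real.sqrt (1 + x^2)

lemma gg_sq (x : ℝ) : Real.sqrt (1 + x^2) ^ 2 = 1 + x^2 :=
  Real.sq_sqrt (by positivity)

lemma gg_pos (x : ℝ) : 0 < gg x := by
  have h := gg_sq x
  have h0 := Real.sqrt_nonneg (1 + x^2)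
  unfold gg
  nlinarith [sq_nonneg (x + Real.sqrt (1 + x^2)), sq_nonneg (x - Real.sqrt (1 + x^2))]

lemma gg_le (x : ℝ) : gg x ≤ 1 + 2 * |x| := by
  have h : Real.sqrt (1 + x^2) ≤ 1 + |x| := by
    rw [show (1:ℝ) + x^2 = ((1 + |x|)^2 - 2*|x|) by rw [← sq_abs x]; ring]
    calc Real.sqrt ((1 + |x|)^2 - 2*|x|) ≤ Real.sqrt ((1 + |x|)^2) := by
          apply Real.sqrt_le_sqrt; nlinarith [abs_nonneg x]
      _ = 1 + |x| := Real.sqrt_sq (by positivity)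
  have := abs_nonneg x
  have := le_abs_self x
  unfold gg; linarith

lemma gg_mono : StrictMono gg := by
  intro a b hab
  have ha := gg_sq a
  have hb := gg_sq b
  have ha0 := gg_pos a
  have hb0 := gg_pos b
  have ha1 := Real.sqrt_nonneg (1 + a^2)
  have hb1 := Real.sqrt_nonneg (1 + b^2)
  unfold gg at *
  nlinarith [mul_pos (sub_pos.2 hab) (add_pos ha0 hb0)]

lemma gg_uv {a b : ℝ} : 1 + a*b ≤ Real.sqrt (1 + a^2) * Real.sqrt (1 + b^2) := by
  have ha := gg_sq a
  have hb := gg_sq b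
  have ha1 := Real.sqrt_nonneg (1 + a^2)
  have hb1 := Real.sqrt_nonneg (1 + b^2)
  nlinarith [sq_nonneg (a - b), mul_nonneg ha1 hb1,
    sq_nonneg (Real.sqrt (1 + a^2) * Real.sqrt (1 + b^2) - (1 + a*b)),
    sq_nonneg (Real.sqrt (1 + a^2) - Real.sqrt (1 + b^2))]

lemma gg_conv (a b : ℝ) : gg ((a + b)/2) ≤ (gg a + gg b)/2 := by
  have ha := gg_sq a
  have hb := gg_sq b
  have hw := gg_sq ((a+b)/2)
  have ha1 := Real.sqrt_nonneg (1 + a^2)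
  have hb1 := Real.sqrt_nonneg (1 + b^2)
  have hw1 := Real.sqrt_nonneg (1 + ((a+b)/2)^2)
  have huv := gg_uv (a := a) (b := b)
  unfold gg
  nlinarith [sq_nonneg (Real.sqrt (1 + a^2) + Real.sqrt (1 + b^2) - 2 * Real.sqrt (1 + ((a+b)/2)^2))]

lemma gg_strict {a b : ℝ} (h : gg ((a + b)/2) = (gg a + gg b)/2) : a = b := by
  have ha := gg_sq a
  have hb := gg_sq b
  have hw := gg_sq ((a+b)/2)
  have ha1 := Real.sqrt_nonneg (1 + a^2)
  have hb1 := Real.sqrt_nonneg (1 + b^2)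
  have hw1 := Real.sqrt_nonneg (1 + ((a+b)/2)^2)
  unfold gg at h
  have h2 : 2 * Real.sqrt (1 + ((a+b)/2)^2) = Real.sqrt (1 + a^2) + Real.sqrt (1 + b^2) := by
    linarith
  have h3 : (2 * Real.sqrt (1 + ((a+b)/2)^2))^2
      = (Real.sqrt (1 + a^2) + Real.sqrt (1 + b^2))^2 := by rw [h2]
  have huv : Real.sqrt (1 + a^2) * Real.sqrt (1 + b^2) = 1 + a*b := by nlinarith [h3]
  have key : (a - b)^2 = 0 := by nlinarith [huv, mul_self_nonneg (a-b)]
  have := pow_eq_zero_iff (n := 2) (by norm_num) |>.mp key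
  linarith [sub_eq_zero.mp this]

lemma gg_inv {t : ℝ} (ht : 0 < t) : gg ((t - t⁻¹)/2) = t := by
  have hti := inv_pos.2 ht
  have h1 : (1 : ℝ) + ((t - t⁻¹)/2)^2 = ((t + t⁻¹)/2)^2 := by
    field_simp; ring
  unfold gg
  rw [h1, Real.sqrt_sq (by positivity)]
  ring

lemma gg_cont : Continuous gg := by
  unfold gg
  exact continuous_id.add ((Real.continuous_sqrt).comp (by continuity))

lemma gg_tail {t : ℝ} (ht : 0 < t) : {x : ℝ | t < gg x} = Set.Ioi ((t - t⁻¹)/2) := by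
  ext x
  simp only [Set.mem_setOf_eq, Set.mem_Ioi]
  constructor
  · intro h
    exact gg_mono.lt_iff_lt.mp (by rw [gg_inv ht]; exact h)
  · intro h
    calc t = gg ((t - t⁻¹)/2) := (gg_inv ht).symm
      _ < gg x := gg_mono h


/-- If `X` is a non-degenerate real random variable (its law is not a Dirac point mass)
whose distribution belongs to `D⁻`, then `E|X| = ∞`. -/
theorem stmt2 (Ω : Type) [MeasureSpace Ω] [IsProbabilityMeasure (ℙ : Measure Ω)]
    (X : Ω → ℝ) (hX : Measurable X)
    (hnondeg : ¬ ∃ c : ℝ, Measure.map X ℙ = Measure.dirac c)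
    (hD : IsDNeg (Measure.map X ℙ)) :
    ∫⁻ ω, ENNReal.ofReal |X ω| ∂ℙ = ⊤ := by
  by_contra hcon
  set μ : Measure ℝ := Measure.map X ℙ with hμdef
  haveI hPμ : IsProbabilityMeasure μ := Measure.isProbabilityMeasure_map hX.aemeasurable
  have habs : ∫⁻ x, ENNReal.ofReal |x| ∂μ ≠ ⊤ := by
    rw [hμdef, lintegral_map (f := fun x : ℝ => ENNReal.ofReal |x|)
      (measurable_abs.ennreal_ofReal) hX]
    exact hcon
  set π : Measure (Fin 2 → ℝ) := Measure.pi (fun _ => μ) with hπdef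
  haveI hπprob : IsProbabilityMeasure π := inferInstance
  -- eval preimages
  have heval : ∀ (i : Fin 2) (s : Set ℝ), π ((fun ω : Fin 2 → ℝ => ω i) ⁻¹' s) = μ s := by
    intro i s
    classical
    have h1 : (fun ω : Fin 2 → ℝ => ω i) ⁻¹' s
        = Set.pi Set.univ (Function.update (fun _ => Set.univ) i s) := by
      ext ω
      simp only [Set.mem_preimage, Set.mem_univ_pi, Function.update_apply]
      constructor
      · intro h j
        split
        · next hj => subst hj; exact h
        · exact Set.mem_univ _
      · intro h
        simpa using h i
    rw [h1, hπdef, Measure.pi_pi]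
    have h2 : ∀ j, (fun _ : Fin 2 => μ) j (Function.update (fun _ => Set.univ) i s j)
        = Function.update (fun _ : Fin 2 => (1:ℝ≥0∞)) i (μ s) j := by
      intro j
      by_cases hj : j = i
      · subst hj; simp
      · simp [Function.update_of_ne hj]
    rw [Finset.prod_congr rfl (fun j _ => h2 j),
      Finset.prod_update_of_mem (Finset.mem_univ i)]
    simp
  have hevalmap : ∀ i : Fin 2, Measure.map (fun ω : Fin 2 → ℝ => ω i) π = μ := by
    intro i
    ext s hs
    rw [Measure.map_apply (measurable_pi_apply i) hs, heval i s]
  have hindep : iIndepFun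
      (fun (i : Fin 2) (ω : Fin 2 → ℝ) => ω i) π := by
    classical
    rw [iIndepFun_iff_measure_inter_preimage_eq_mul]
    intro S sets hsets
    have hInt : (⋂ i ∈ S, (fun ω : Fin 2 → ℝ => ω i) ⁻¹' sets i)
        = Set.pi Set.univ (fun j => if j ∈ S then sets j else Set.univ) := by
      ext ω
      simp only [Set.mem_iInter, Set.mem_preimage, Set.mem_pi, Set.mem_univ, true_implies]
      constructor
      · intro h j
        by_cases hj : j ∈ S
        · simpa [hj] using h j hj
        · simp [hj]
      · intro h i hi
        have := h i
        rwa [if_pos hi] at this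
    rw [hInt, hπdef, Measure.pi_pi]
    have h3 : ∀ j, (fun _ : Fin 2 => μ) j (if j ∈ S then sets j else Set.univ)
        = if j ∈ S then μ (sets j) else 1 := by
      intro j; split <;> simp
    rw [Finset.prod_congr rfl (fun j _ => h3 j),
      Finset.prod_ite_mem Finset.univ S (fun j => μ (sets j)), Finset.univ_inter]
    exact Finset.prod_congr rfl fun i _ => (heval i (sets i)).symm
  -- apply the D⁻ hypothesis with n = 2, weights 1/2
  set Y : (Fin 2 → ℝ) → ℝ := fun ω => ∑ i : Fin 2, (2⁻¹ : ℝ) * ω i with hYdef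
  have hY : Measurable Y := by
    apply Finset.measurable_sum
    intro i _
    exact (measurable_pi_apply i).const_mul _
  have hcdf : ∀ t : ℝ, Measure.map Y π (Set.Iic t) ≤ μ (Set.Iic t) := by
    intro t
    letI mΩ : MeasureSpace (Fin 2 → ℝ) := { volume := π }
    have h := hD 2 (fun _ => (2⁻¹ : ℝ)) (fun _ => by norm_num)
      (by norm_num [Fin.sum_univ_two]) (Fin 2 → ℝ)
    exact h hπprob (fun i ω => ω i) (fun i => measurable_pi_apply i) hevalmap hindep t
  set ν : Measure ℝ := Measure.map Y π with hνdef
  haveI : IsProbabilityMeasure ν := Measure.isProbabilityMeasure_map hY.aemeasurable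
  have hle_tail : ∀ c : ℝ, μ (Set.Ioi c) ≤ ν (Set.Ioi c) := by
    intro c
    have h1 := hcdf c
    rw [show Set.Ioi c = (Set.Iic c)ᶜ by simp]
    rw [prob_compl_eq_one_sub measurableSet_Iic, prob_compl_eq_one_sub measurableSet_Iic]
    exact tsub_le_tsub_left h1 1
  -- the key convex increasing function
  set G : ℝ → ℝ≥0∞ := fun x => ENNReal.ofReal (gg x) with hGdef
  have hGmeas : Measurable G := ENNReal.measurable_ofReal.comp gg_cont.measurable
  -- finiteness of ∫ G dμ
  have hGfin : ∫⁻ x, G x ∂μ ≠ ⊤ := by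
    have hb : ∀ x : ℝ, G x ≤ 1 + 2 * ENNReal.ofReal |x| := by
      intro x
      calc G x ≤ ENNReal.ofReal (1 + 2 * |x|) := ENNReal.ofReal_le_ofReal (gg_le x)
        _ = 1 + 2 * ENNReal.ofReal |x| := by
          rw [ENNReal.ofReal_add (by norm_num) (by positivity),
            ENNReal.ofReal_mul (by norm_num)]
          norm_num
    have : ∫⁻ x, G x ∂μ ≤ 1 + 2 * ∫⁻ x, ENNReal.ofReal |x| ∂μ := by
      calc ∫⁻ x, G x ∂μ ≤ ∫⁻ x, (1 + 2 * ENNReal.ofReal |x|) ∂μ := lintegral_mono hb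
        _ = 1 + 2 * ∫⁻ x, ENNReal.ofReal |x| ∂μ := by
          rw [lintegral_add_left measurable_const, lintegral_const_mul 2
            measurable_abs.ennreal_ofReal, lintegral_const, measure_univ,
            one_mul]
    exact ne_top_of_le_ne_top (by
      exact ENNReal.add_ne_top.mpr ⟨ENNReal.one_ne_top,
        ENNReal.mul_ne_top (by norm_num) habs⟩) this
  -- claim A : stochastic order gives ∫ G dμ ≤ ∫ G dν
  have hA : ∫⁻ x, G x ∂μ ≤ ∫⁻ x, G x ∂ν := by
    rw [hGdef]
    rw [lintegral_eq_lintegral_meas_lt μ (ae_of_all _ fun x => (gg_pos x).le)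
      gg_cont.measurable.aemeasurable,
      lintegral_eq_lintegral_meas_lt ν (ae_of_all _ fun x => (gg_pos x).le)
      gg_cont.measurable.aemeasurable]
    apply setLIntegral_mono' measurableSet_Ioi
    intro t ht
    rw [gg_tail ht]
    exact hle_tail _
  -- claim B : convexity
  have hYeq : ∀ ω : Fin 2 → ℝ, Y ω = (ω 0 + ω 1)/2 := by
    intro ω
    rw [hYdef]
    simp [Fin.sum_univ_two]
    ring
  set H : (Fin 2 → ℝ) → ℝ≥0∞ := fun ω => (G (ω 0) + G (ω 1)) / 2 with hHdef
  have hHmeas : Measurable H :=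
    ((hGmeas.comp (measurable_pi_apply 0)).add (hGmeas.comp (measurable_pi_apply 1))).div_const 2
  have hHeq : ∀ ω : Fin 2 → ℝ, H ω = ENNReal.ofReal ((gg (ω 0) + gg (ω 1))/2) := by
    intro ω
    rw [ENNReal.ofReal_div_of_pos (by norm_num),
      ENNReal.ofReal_add (gg_pos _).le (gg_pos _).le]
    norm_num [hHdef, hGdef]
  have hFH : ∀ ω : Fin 2 → ℝ, G (Y ω) ≤ H ω := by
    intro ω
    rw [hHeq, hGdef, hYeq]
    exact ENNReal.ofReal_le_ofReal (gg_conv _ _)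
  have hHint : ∫⁻ ω, H ω ∂π = ∫⁻ x, G x ∂μ := by
    have h0 : ∀ i : Fin 2, ∫⁻ ω, G (ω i) ∂π = ∫⁻ x, G x ∂μ := by
      intro i
      conv_rhs => rw [← hevalmap i]
      rw [lintegral_map hGmeas (measurable_pi_apply i)]
    have : ∫⁻ ω, H ω ∂π
        = ((∫⁻ ω, G (ω 0) ∂π) + ∫⁻ ω, G (ω 1) ∂π) / 2 := by
      rw [hHdef]
      simp only [div_eq_mul_inv]
      rw [lintegral_mul_const' _ _ (by norm_num),
        lintegral_add_left (show Measurable fun ω : Fin 2 → ℝ => G (ω 0) from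
          hGmeas.comp (measurable_pi_apply 0))]
    rw [this, h0 0, h0 1, ← two_mul, mul_div_assoc,
      ENNReal.mul_div_cancel' (by norm_num) (by norm_num)]
  have hGY : ∫⁻ ω, G (Y ω) ∂π = ∫⁻ x, G x ∂ν := (lintegral_map hGmeas hY).symm
  have hup : ∫⁻ ω, G (Y ω) ∂π ≤ ∫⁻ ω, H ω ∂π := lintegral_mono hFH
  have hdown : ∫⁻ ω, H ω ∂π ≤ ∫⁻ ω, G (Y ω) ∂π := by
    rw [hHint, hGY]; exact hA
  have hfinF : ∫⁻ ω, G (Y ω) ∂π ≠ ⊤ :=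
    ne_top_of_le_ne_top (hHint ▸ hGfin) hup
  have hae : (fun ω => G (Y ω)) =ᵐ[π] H :=
    ae_eq_of_ae_le_of_lintegral_le (ae_of_all _ hFH) hfinF hHmeas.aemeasurable hdown
  have hdiag : ∀ᵐ ω ∂π, ω 0 = ω 1 := by
    filter_upwards [hae] with ω hω
    apply gg_strict
    rw [hHeq ω] at hω
    have h1 : ENNReal.ofReal (gg (Y ω)) = ENNReal.ofReal ((gg (ω 0) + gg (ω 1))/2) := by
      simpa [hGdef] using hω
    have h2 := (ENNReal.ofReal_eq_ofReal_iff (gg_pos _).le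
      (by have := gg_pos (ω 0); have := gg_pos (ω 1); linarith)).mp h1
    rw [← hYeq ω]
    exact h2
  have hDmeas : MeasurableSet {ω : Fin 2 → ℝ | ω 0 = ω 1} :=
    (isClosed_eq (continuous_apply 0) (continuous_apply 1)).measurableSet
  have hdset : π {ω : Fin 2 → ℝ | ω 0 = ω 1} = 1 := by
    have hc : π {ω : Fin 2 → ℝ | ω 0 = ω 1}ᶜ = 0 := by
      have h := hdiag
      rw [ae_iff] at h
      simpa [Set.compl_setOf] using h
    have h2 := prob_compl_eq_one_sub (μ := π) hDmeas
    rw [hc] at h2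
    have hle := prob_le_one (μ := π) (s := {ω : Fin 2 → ℝ | ω 0 = ω 1})
    exact le_antisymm hle (tsub_eq_zero_iff_le.mp h2.symm)
  have hms : MeasurableSet {p : ℝ × ℝ | p.1 = p.2} :=
    (isClosed_eq continuous_fst continuous_snd).measurableSet
  have hprod : (μ.prod μ) {p : ℝ × ℝ | p.1 = p.2} = 1 := by
    have hmp := measurePreserving_piFinTwo (fun _ : Fin 2 => μ)
    have hpre := hmp.measure_preimage hms.nullMeasurableSet
    have hset : (MeasurableEquiv.piFinTwo (fun _ : Fin 2 => ℝ)) ⁻¹' {p : ℝ × ℝ | p.1 = p.2}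
        = {ω : Fin 2 → ℝ | ω 0 = ω 1} := by
      ext ω
      simp [MeasurableEquiv.piFinTwo_apply]
    rw [hset] at hpre
    rw [← hpre]
    exact hdset
  have hpa : ∫⁻ a, μ {a} ∂μ = 1 := by
    rw [← hprod, Measure.prod_apply hms]
    congr 1
    funext a
    congr 1
    ext b
    simp [eq_comm]
  have hone : (fun a : ℝ => μ {a}) =ᵐ[μ] fun _ => 1 := by
    apply ae_eq_of_ae_le_of_lintegral_le (ae_of_all _ fun a => prob_le_one)
    · rw [hpa]; exact ENNReal.one_ne_top
    · exact aemeasurable_const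
    · rw [hpa]; simp
  haveI : (ae μ).NeBot := ae_neBot.mpr (IsProbabilityMeasure.ne_zero (μ := μ))
  obtain ⟨a, ha⟩ := hone.exists
  simp only at ha
  have hdirac : μ = Measure.dirac a := by
    ext s hs
    rw [Measure.dirac_apply' a hs]
    by_cases has : a ∈ s
    · rw [Set.indicator_of_mem has]
      simp only [Pi.one_apply]
      refine le_antisymm prob_le_one ?_
      calc (1:ℝ≥0∞) = μ {a} := ha.symm
        _ ≤ μ s := measure_mono (Set.singleton_subset_iff.2 has)
    · rw [Set.indicator_of_notMem has]
      have hc : μ {a}ᶜ = 0 := by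
        rw [prob_compl_eq_one_sub (measurableSet_singleton a), ha, tsub_self]
      refine measure_mono_null ?_ hc
      intro x hx h
      rw [Set.mem_singleton_iff] at h
      subst h
      exact has hx
  exact hnondeg ⟨a, hμdef ▸ hdirac⟩
end

section
/- If X and Y are independent real random variables whose distributions both belong to the class D⁻, then the distribution of max{X, Y} belongs to D⁻. -/
open MeasureTheory ProbabilityTheory

section AuxLemmas
open MeasureTheory ProbabilityTheory Set



variable {n : ℕ}

lemma aux_map_eval {α : Type*} [MeasurableSpace α] (κ : Measure α) [IsProbabilityMeasure κ]
    (i : Fin n) :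
    Measure.map (fun w : Fin n → α => w i) (Measure.pi fun _ => κ) = κ := by
  classical
  ext s hs
  rw [Measure.map_apply (measurable_pi_apply i) hs]
  have h : (fun w : Fin n → α => w i) ⁻¹' s
      = univ.pi (fun j => if j = i then s else univ) := by
    ext w
    simp only [mem_preimage, mem_pi, mem_univ, forall_true_left]
    constructor
    · intro hw j
      by_cases hj : j = i
      · subst hj; simp [hw]
      · simp [hj]
    · intro hw; have := hw i; simpa using this
  rw [h, Measure.pi_pi]
  rw [Finset.prod_eq_single i (fun j _ hj => by simp [hj]) (by simp)]
  simp

lemma aux_joint {Ω : Type*} [MeasureSpace Ω] [IsProbabilityMeasure (ℙ : Measure Ω)]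
    {α : Type*} [mα : MeasurableSpace α] (κ : Measure α) [IsProbabilityMeasure κ]
    (Z : Fin n → Ω → α) (hm : ∀ i, Measurable (Z i)) (hl : ∀ i, Measure.map (Z i) ℙ = κ)
    (hi : iIndepFun Z ℙ) :
    Measure.map (fun ω i => Z i ω) ℙ = Measure.pi (fun _ => κ) := by
  refine (Measure.pi_eq fun s hs => ?_).symm
  rw [Measure.map_apply (measurable_pi_lambda _ hm) (MeasurableSet.univ_pi hs)]
  have h : (fun ω i => Z i ω) ⁻¹' (univ.pi s) = ⋂ i ∈ Finset.univ, Z i ⁻¹' s i := by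
    ext ω; simp [Set.mem_pi]
  rw [h, hi.measure_inter_preimage_eq_mul Finset.univ (fun i _ => hs i)]
  exact Finset.prod_congr rfl fun i _ => by
    rw [← hl i, Measure.map_apply (hm i) (hs i)]

lemma aux_pi_comp {α β : Type*} [MeasurableSpace α] [MeasurableSpace β] (κ : Measure α)
    [IsProbabilityMeasure κ] (f : α → β) (hf : Measurable f) :
    Measure.map (fun w : Fin n → α => fun i => f (w i)) (Measure.pi fun _ => κ)
      = Measure.pi (fun _ => Measure.map f κ) := by
  haveI : IsProbabilityMeasure (Measure.map f κ) := Measure.isProbabilityMeasure_map hf.aemeasurable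
  refine (Measure.pi_eq fun s hs => ?_).symm
  have hm : Measurable fun w : Fin n → α => fun i => f (w i) :=
    measurable_pi_lambda _ fun i => hf.comp (measurable_pi_apply i)
  rw [Measure.map_apply hm (MeasurableSet.univ_pi hs)]
  have h : (fun w : Fin n → α => fun i => f (w i)) ⁻¹' (univ.pi s)
      = univ.pi fun i => f ⁻¹' (s i) := by
    ext w; simp [Set.mem_pi]
  rw [h, Measure.pi_pi]
  exact Finset.prod_congr rfl fun i _ => (Measure.map_apply hf (hs i)).symm

lemma aux_iIndep_eval {α : Type*} [mα : MeasurableSpace α] (κ : Measure α)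
    [IsProbabilityMeasure κ] :
    iIndepFun (fun i (w : Fin n → α) => w i)
      (Measure.pi fun _ => κ) := by
  classical
  rw [iIndepFun_iff_measure_inter_preimage_eq_mul]
  intro S sets hsets
  have h : (⋂ i ∈ S, (fun w : Fin n → α => w i) ⁻¹' sets i)
      = univ.pi fun i => if i ∈ S then sets i else univ := by
    ext w
    simp only [mem_iInter, mem_preimage, mem_pi, mem_univ, forall_true_left]
    constructor
    · intro hw j
      by_cases hj : j ∈ S
      · simp [hj, hw j hj]
      · simp [hj]
    · intro hw i hi; have := hw i; simpa [hi] using this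
  rw [h, Measure.pi_pi]
  rw [← Finset.prod_subset (Finset.subset_univ S) (fun j _ hj => by simp [hj])]
  refine Finset.prod_congr rfl fun i hi => ?_
  rw [if_pos hi, ← Measure.map_apply (measurable_pi_apply i) (hsets i hi), aux_map_eval]
end AuxLemmas

open Set in
/-- If `X, Y` are independent real random variables whose distributions belong to `D⁻`,
then the distribution of `max (X, Y)` belongs to `D⁻`. -/
theorem stmt5 (Ω : Type) [MeasureSpace Ω] [IsProbabilityMeasure (ℙ : Measure Ω)]
    (X Y : Ω → ℝ) (hX : Measurable X) (hY : Measurable Y)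
    (hindep : IndepFun X Y ℙ)
    (hXD : IsDNeg (Measure.map X ℙ)) (hYD : IsDNeg (Measure.map Y ℙ)) :
    IsDNeg (Measure.map (fun ω => max (X ω) (Y ω)) ℙ) := by

  classical
  intro n θ hθ hθsum Ω' mΩ' hP Z hZm hZl hZi t
  haveI := hP
  set μX := Measure.map X ℙ with hμX
  set μY := Measure.map Y ℙ with hμY
  haveI : IsProbabilityMeasure μX := Measure.isProbabilityMeasure_map hX.aemeasurable
  haveI : IsProbabilityMeasure μY := Measure.isProbabilityMeasure_map hY.aemeasurable
  set μ := Measure.map (fun ω => max (X ω) (Y ω)) ℙ with hμ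
  haveI : IsProbabilityMeasure μ := Measure.isProbabilityMeasure_map (hX.max hY).aemeasurable
  have hmmax : Measurable (fun p : ℝ × ℝ => max p.1 p.2) := measurable_fst.max measurable_snd
  have hXYm : Measurable (fun ω => (X ω, Y ω)) := hX.prodMk hY
  have hν : Measure.map (fun ω => (X ω, Y ω)) ℙ = μX.prod μY :=
    (indepFun_iff_map_prod_eq_prod_map_map hX.aemeasurable hY.aemeasurable).mp hindep
  have hμeq : μ = Measure.map (fun p : ℝ × ℝ => max p.1 p.2) (μX.prod μY) := by
    rw [← hν, Measure.map_map hmmax hXYm]; rfl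
  have hmax_pre : (fun p : ℝ × ℝ => max p.1 p.2) ⁻¹' Set.Iic t = Set.Iic t ×ˢ Set.Iic t := by
    ext p; simp [max_le_iff, Prod.le_def]
  have hμIic : μ (Set.Iic t) = μX (Set.Iic t) * μY (Set.Iic t) := by
    rw [hμeq, Measure.map_apply hmmax measurableSet_Iic, hmax_pre, Measure.prod_prod]
  have hgm : Measurable fun p : Fin n → ℝ => ∑ i, θ i * p i :=
    by fun_prop
  have hZjm : Measurable fun (ω : Ω') (i : Fin n) => Z i ω := measurable_pi_lambda _ hZm
  have h1 : Measure.map (fun ω => ∑ i, θ i * Z i ω) ℙ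
      = Measure.map (fun p : Fin n → ℝ => ∑ i, θ i * p i) (Measure.pi fun _ : Fin n => μ) := by
    rw [← aux_joint μ Z hZm hZl hZi, Measure.map_map hgm hZjm]; rfl
  have hMm : Measurable fun (w : Fin n → ℝ × ℝ) (i : Fin n) => max (w i).1 (w i).2 :=
    measurable_pi_lambda _ fun i => hmmax.comp (measurable_pi_apply i)
  have h2 : Measure.pi (fun _ : Fin n => μ)
      = Measure.map (fun (w : Fin n → ℝ × ℝ) (i : Fin n) => max (w i).1 (w i).2)
          (Measure.pi fun _ => μX.prod μY) := by
    rw [hμeq]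
    exact (aux_pi_comp _ _ hmmax).symm
  have h3 : Measure.map (fun ω => ∑ i, θ i * Z i ω) ℙ (Set.Iic t)
      = (Measure.pi fun _ : Fin n => μX.prod μY)
          {w : Fin n → ℝ × ℝ | ∑ i, θ i * max (w i).1 (w i).2 ≤ t} := by
    rw [h1, h2, Measure.map_map hgm hMm, Measure.map_apply (hgm.comp hMm) measurableSet_Iic]
    rfl
  set SA : Set (Fin n → ℝ) := (fun p : Fin n → ℝ => ∑ i, θ i * p i) ⁻¹' Set.Iic t with hSA
  have hSAm : MeasurableSet SA := hgm measurableSet_Iic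
  have hsub : {w : Fin n → ℝ × ℝ | ∑ i, θ i * max (w i).1 (w i).2 ≤ t}
      ⊆ (MeasurableEquiv.arrowProdEquivProdArrow ℝ ℝ (Fin n)) ⁻¹' (SA ×ˢ SA) := by
    intro w hw
    have hA : ∑ i, θ i * (w i).1 ≤ t :=
      le_trans (Finset.sum_le_sum fun i _ =>
        mul_le_mul_of_nonneg_left (le_max_left _ _) (hθ i)) hw
    have hB : ∑ i, θ i * (w i).2 ≤ t :=
      le_trans (Finset.sum_le_sum fun i _ =>
        mul_le_mul_of_nonneg_left (le_max_right _ _) (hθ i)) hw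
    simp only [Set.mem_preimage, MeasurableEquiv.arrowProdEquivProdArrow,
      Equiv.arrowProdEquivProdArrow, MeasurableEquiv.coe_mk, Equiv.coe_fn_mk,
      Set.mem_prod, hSA, Set.mem_Iic]
    exact ⟨hA, hB⟩
  have hmp := (measurePreserving_arrowProdEquivProdArrow ℝ ℝ (Fin n)
      (fun _ => μX) (fun _ => μY)).map_eq
  have h4 : (Measure.pi fun _ : Fin n => μX.prod μY)
        ((MeasurableEquiv.arrowProdEquivProdArrow ℝ ℝ (Fin n)) ⁻¹' (SA ×ˢ SA))
      = (Measure.pi fun _ : Fin n => μX) SA * (Measure.pi fun _ : Fin n => μY) SA := by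
    rw [← Measure.map_apply (MeasurableEquiv.measurable _) (hSAm.prod hSAm), hmp,
      Measure.prod_prod]
  have key : ∀ (κ : Measure ℝ), IsProbabilityMeasure κ → IsDNeg κ →
      (Measure.pi fun _ : Fin n => κ) SA ≤ κ (Set.Iic t) := by
    intro κ hκ hD
    haveI := hκ
    have hD' := hD n θ hθ hθsum
    have hb := @hD' (Fin n → ℝ) ⟨Measure.pi fun _ => κ⟩
      (show IsProbabilityMeasure (Measure.pi fun _ : Fin n => κ) from inferInstance)
      (fun i (p : Fin n → ℝ) => p i) (fun i => measurable_pi_apply i)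
      (fun i => aux_map_eval κ i) (aux_iIndep_eval κ) t
    rw [Measure.map_apply hgm measurableSet_Iic] at hb
    exact hb
  calc Measure.map (fun ω => ∑ i, θ i * Z i ω) ℙ (Set.Iic t)
      = (Measure.pi fun _ : Fin n => μX.prod μY)
          {w : Fin n → ℝ × ℝ | ∑ i, θ i * max (w i).1 (w i).2 ≤ t} := h3
    _ ≤ (Measure.pi fun _ : Fin n => μX.prod μY)
          ((MeasurableEquiv.arrowProdEquivProdArrow ℝ ℝ (Fin n)) ⁻¹' (SA ×ˢ SA)) :=
        measure_mono hsub
    _ = (Measure.pi fun _ : Fin n => μX) SA * (Measure.pi fun _ : Fin n => μY) SA := h4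
    _ ≤ μX (Set.Iic t) * μY (Set.Iic t) :=
        mul_le_mul' (key μX inferInstance hXD) (key μY inferInstance hYD)
    _ = μ (Set.Iic t) := hμIic.symm
end

section
/- If X is a real random variable whose distribution belongs to the class D⁻ and φ: ℝ → ℝ is non-decreasing and convex, then the distribution of φ(X) belongs to D⁻. -/
open MeasureTheory ProbabilityTheory

section Aux

open Set

/-- The joint law of a finite family of independent real random variables is the product
of their laws. -/
lemma aux_joint_law {n : ℕ} {Ω : Type*} [MeasureSpace Ω] [IsProbabilityMeasure (ℙ : Measure Ω)]
    (Y : Fin n → Ω → ℝ) (hYm : ∀ i, Measurable (Y i))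
    (hind : iIndepFun Y ℙ) :
    Measure.pi (fun i => Measure.map (Y i) ℙ) = Measure.map (fun ω i => Y i ω) ℙ := by
  haveI : ∀ i, IsProbabilityMeasure (Measure.map (Y i) ℙ) :=
    fun i => Measure.isProbabilityMeasure_map (hYm i).aemeasurable
  refine Measure.pi_eq fun s hs => ?_
  rw [Measure.map_apply (measurable_pi_iff.mpr hYm) (MeasurableSet.univ_pi hs)]
  have hpre : (fun ω i => Y i ω) ⁻¹' (univ.pi s) = ⋂ i, Y i ⁻¹' s i := by
    ext ω; simp [Set.mem_pi]
  rw [hpre, hind.meas_iInter fun i => ⟨s i, hs i, rfl⟩]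
  exact Finset.prod_congr rfl fun i _ => (Measure.map_apply (hYm i) (hs i)).symm

/-- Coordinate projections of a product of copies of a probability measure have that
measure as law. -/
lemma aux_eval_law {n : ℕ} (μ : Measure ℝ) [IsProbabilityMeasure μ] (i : Fin n) :
    Measure.map (fun v : Fin n → ℝ => v i) (Measure.pi fun _ => μ) = μ := by
  refine Measure.ext fun s hs => ?_
  rw [Measure.map_apply (measurable_pi_apply i) hs]
  have : (fun v : Fin n → ℝ => v i) ⁻¹' s
      = univ.pi (Function.update (fun _ => (univ : Set ℝ)) i s) := by
    rw [Set.univ_pi_update_univ]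
  rw [this, Measure.pi_pi]
  rw [Finset.prod_eq_single i (fun j _ hj => by simp [Function.update_of_ne hj])
    (fun h => absurd (Finset.mem_univ i) h)]
  simp

/-- Coordinate projections on a product probability space are independent. -/
lemma aux_eval_indep {n : ℕ} (μ : Measure ℝ) [IsProbabilityMeasure μ] :
    iIndepFun (fun (i : Fin n) (v : Fin n → ℝ) => v i)
      (Measure.pi fun _ => μ) := by
  rw [iIndepFun_iff_measure_inter_preimage_eq_mul]
  intro S sets hsets
  have h1 : ∀ (i : Fin n) (s : Set ℝ), MeasurableSet s →
      (Measure.pi fun _ => μ) ((fun v : Fin n → ℝ => v i) ⁻¹' s) = μ s := by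
    intro i s hs
    rw [← Measure.map_apply (measurable_pi_apply i) hs, aux_eval_law]
  have h2 : (⋂ i ∈ S, (fun v : Fin n → ℝ => v i) ⁻¹' sets i)
      = univ.pi (fun i => if i ∈ S then sets i else univ) := by
    ext v
    simp only [Set.mem_iInter, Set.mem_preimage, Set.mem_pi, Set.mem_univ, true_implies]
    constructor
    · intro h i; split_ifs with hi
      · exact h i hi
      · trivial
    · intro h i hi; have := h i; rwa [if_pos hi] at this
  rw [h2, Measure.pi_pi]
  have h3 : ∀ i : Fin n, μ (if i ∈ S then sets i else univ) = if i ∈ S then μ (sets i) else 1 := by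
    intro i; split_ifs <;> simp
  simp_rw [h3]
  rw [Finset.prod_ite_mem Finset.univ S (fun i => μ (sets i)), Finset.univ_inter]
  exact Finset.prod_congr rfl fun i hi => (h1 i (sets i) (hsets i hi)).symm

/-- If `ν` is stochastically dominated by `μ` (cdf-wise), then `ν A ≤ μ A` for every lower
set `A ⊆ ℝ`. -/
lemma aux_lower_cmp (ν μ : Measure ℝ) [IsProbabilityMeasure ν] [IsProbabilityMeasure μ]
    (h : ∀ s, ν (Iic s) ≤ μ (Iic s)) (A : Set ℝ) (hA : IsLowerSet A) : ν A ≤ μ A := by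
  rcases A.eq_empty_or_nonempty with rfl | hne
  · simp
  by_cases hbdd : BddAbove A
  · set s := sSup A with hs
    by_cases hmem : s ∈ A
    · have : A = Iic s := by
        apply Set.Subset.antisymm
        · exact fun x hx => le_csSup hbdd hx
        · exact fun x hx => hA hx hmem
      rw [this]; exact h s
    · have hAeq : A = Iio s := by
        apply Set.Subset.antisymm
        · intro x hx
          exact lt_of_le_of_ne (le_csSup hbdd hx) (fun hxs => hmem (by rwa [hxs] at hx))
        · intro x hx
          obtain ⟨a, ha, hxa⟩ := exists_lt_of_lt_csSup hne hx
          exact hA hxa.le ha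
      have hun : Iio s = ⋃ k : ℕ, Iic (s - 1/(k+1)) := by
        ext x
        simp only [Set.mem_Iio, Set.mem_iUnion, Set.mem_Iic]
        constructor
        · intro hx
          obtain ⟨k, hk⟩ := exists_nat_one_div_lt (sub_pos.mpr hx)
          exact ⟨k, by linarith⟩
        · rintro ⟨k, hk⟩
          have : (0:ℝ) < 1/(k+1) := by positivity
          linarith
      have hmono : Monotone (fun k : ℕ => Iic (s - 1/(k+1))) := by
        intro a b hab
        apply Set.Iic_subset_Iic.mpr
        have : (1:ℝ)/(b+1) ≤ 1/(a+1) := by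
          apply one_div_le_one_div_of_le (by positivity) (by exact_mod_cast by omega)
        linarith
      rw [hAeq, hun, hmono.directed_le.measure_iUnion,
        hmono.directed_le.measure_iUnion]
      exact iSup_mono fun k => h _
  · have hAu : A = univ := by
      apply Set.eq_univ_of_forall
      intro x
      obtain ⟨a, ha, hxa⟩ := not_bddAbove_iff.mp hbdd x
      exact hA hxa.le ha
    rw [hAu]
    simp

end Aux

/-- If the distribution of `X` belongs to `D⁻` and `φ : ℝ → ℝ` is non-decreasing and convex,
then the distribution of `φ (X)` belongs to `D⁻`. -/
theorem stmt6 (Ω : Type) [MeasureSpace Ω] [IsProbabilityMeasure (ℙ : Measure Ω)]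
    (X : Ω → ℝ) (hX : Measurable X) (hD : IsDNeg (Measure.map X ℙ))
    (φ : ℝ → ℝ) (hmono : Monotone φ) (hconv : ConvexOn ℝ Set.univ φ) :
    IsDNeg (Measure.map (fun ω => φ (X ω)) ℙ) := by
  intro n θ hθ hθsum Ω' mΩ' hP' Y hYm hYlaw hYind t
  have hφm : Measurable φ := hmono.measurable
  set μ : Measure ℝ := Measure.map X ℙ with hμ
  haveI : IsProbabilityMeasure μ := Measure.isProbabilityMeasure_map hX.aemeasurable
  set ν : Measure ℝ := Measure.map (fun ω => φ (X ω)) ℙ with hν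
  haveI : IsProbabilityMeasure ν := Measure.isProbabilityMeasure_map (hφm.comp hX).aemeasurable
  -- the law of φ ∘ X is the pushforward of μ by φ
  have hνμ : ν = Measure.map φ μ := (Measure.map_map hφm hX).symm
  -- measurable weighted-sum map
  have hgm : Measurable (fun v : Fin n → ℝ => ∑ i, θ i * v i) :=
    Finset.univ.measurable_sum fun i _ => (measurable_pi_apply (X := fun _ : Fin n => ℝ) i).const_mul (θ i)
  -- canonical product space
  set κ : Measure (Fin n → ℝ) := Measure.pi (fun _ : Fin n => μ) with hκ
  haveI : IsProbabilityMeasure κ := by rw [hκ]; infer_instance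
  letI mcan : MeasureSpace (Fin n → ℝ) := ⟨κ⟩
  have hcan : (ℙ : Measure (Fin n → ℝ)) = κ := rfl
  have hZm : ∀ i : Fin n, Measurable (fun v : Fin n → ℝ => v i) :=
    fun i => measurable_pi_apply i
  have hZlaw : ∀ i : Fin n, Measure.map (fun v : Fin n → ℝ => v i) κ = μ :=
    fun i => aux_eval_law μ i
  have hZind : iIndepFun
      (fun (i : Fin n) (v : Fin n → ℝ) => v i) κ := aux_eval_indep μ
  -- hD applied on the canonical space
  have hDapp : ∀ s : ℝ,
      Measure.map (fun v : Fin n → ℝ => ∑ i, θ i * v i) κ (Set.Iic s) ≤ μ (Set.Iic s) := by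
    intro s
    exact hD n θ hθ hθsum (Fin n → ℝ) ‹IsProbabilityMeasure κ›
      (fun i v => v i) hZm hZlaw hZind s
  -- the φ-images of the coordinates are iid with law ν
  have hφZm : ∀ i : Fin n, Measurable (fun v : Fin n → ℝ => φ (v i)) :=
    fun i => hφm.comp (hZm i)
  have hφZlaw : ∀ i : Fin n, Measure.map (fun v : Fin n → ℝ => φ (v i)) κ = ν := by
    intro i
    rw [hνμ, ← hZlaw i, Measure.map_map hφm (hZm i)]
    rfl
  have hφZind : iIndepFun
      (fun (i : Fin n) (v : Fin n → ℝ) => φ (v i)) κ :=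
    hZind.comp (fun _ => φ) (fun _ => hφm)
  -- joint laws: both (Y i) and (φ ∘ eval i) have joint law `pi ν`
  have hjY : Measure.map (fun ω i => Y i ω) ℙ = Measure.pi (fun _ : Fin n => ν) := by
    rw [← aux_joint_law Y hYm hYind]
    congr 1
    ext i : 1
    exact hYlaw i
  have hjφZ : Measure.map (fun (v : Fin n → ℝ) i => φ (v i)) κ
      = Measure.pi (fun _ : Fin n => ν) := by
    have h := aux_joint_law (Ω := Fin n → ℝ) (fun i v => φ (v i)) hφZm hφZind
    exact h.symm.trans (congrArg Measure.pi (funext hφZlaw))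
  -- hence the weighted sums of the Y's and of the φ(eval)'s have the same law
  have hYsum : Measure.map (fun ω => ∑ i, θ i * Y i ω) ℙ
      = Measure.map (fun v : Fin n → ℝ => ∑ i, θ i * φ (v i)) κ := by
    have e1 : Measure.map (fun ω => ∑ i, θ i * Y i ω) ℙ
        = Measure.map (fun v : Fin n → ℝ => ∑ i, θ i * v i)
            (Measure.map (fun ω i => Y i ω) ℙ) := by
      rw [Measure.map_map hgm (measurable_pi_iff.mpr hYm)]
      rfl
    have e2 : Measure.map (fun v : Fin n → ℝ => ∑ i, θ i * φ (v i)) κ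
        = Measure.map (fun v : Fin n → ℝ => ∑ i, θ i * v i)
            (Measure.map (fun (v : Fin n → ℝ) i => φ (v i)) κ) := by
      rw [Measure.map_map hgm (measurable_pi_iff.mpr hφZm)]
      rfl
    rw [e1, e2, hjY, hjφZ]
  -- the lower set A = φ ⁻¹' (Iic t)
  set A : Set ℝ := φ ⁻¹' (Set.Iic t) with hA
  have hAm : MeasurableSet A := hφm measurableSet_Iic
  have hAlow : IsLowerSet A := fun a b hba ha => le_trans (hmono hba) ha
  -- the RHS equals μ A
  have hRHS : ν (Set.Iic t) = μ A := by
    rw [hνμ, Measure.map_apply hφm measurableSet_Iic]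
  -- Jensen: pointwise comparison on the canonical space
  have hJensen : ∀ v : Fin n → ℝ, φ (∑ i, θ i * v i) ≤ ∑ i, θ i * φ (v i) := by
    intro v
    have := hconv.map_sum_le (t := Finset.univ) (w := θ) (p := v)
      (fun i _ => hθ i) (by simpa using hθsum) (fun i _ => Set.mem_univ _)
    simpa [smul_eq_mul] using this
  calc Measure.map (fun ω => ∑ i, θ i * Y i ω) ℙ (Set.Iic t)
      = Measure.map (fun v : Fin n → ℝ => ∑ i, θ i * φ (v i)) κ (Set.Iic t) := by
        rw [hYsum]
    _ = κ ((fun v : Fin n → ℝ => ∑ i, θ i * φ (v i)) ⁻¹' Set.Iic t) := by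
        rw [Measure.map_apply (Finset.univ.measurable_sum (f := fun i (v : Fin n → ℝ) => θ i * φ (v i)) fun i _ =>
          (hφZm i).const_mul (θ i)) measurableSet_Iic]
    _ ≤ κ ((fun v : Fin n → ℝ => ∑ i, θ i * v i) ⁻¹' A) := by
        apply measure_mono
        intro v hv
        simp only [Set.mem_preimage, Set.mem_Iic] at hv ⊢
        exact le_trans (hJensen v) hv
    _ = Measure.map (fun v : Fin n → ℝ => ∑ i, θ i * v i) κ A := by
        rw [Measure.map_apply hgm hAm]
    _ ≤ μ A := by
        haveI : IsProbabilityMeasure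
            (Measure.map (fun v : Fin n → ℝ => ∑ i, θ i * v i) κ) :=
          Measure.isProbabilityMeasure_map hgm.aemeasurable
        exact aux_lower_cmp _ μ hDapp A hAlow
    _ = ν (Set.Iic t) := hRHS.symm
end

section
/- The standard Fréchet distribution is more skewed than the standard Cauchy distribution: the function h(x) = tan(π e^{−1/x} − π/2) = F⁻¹(G(x)) is concave on (0, ∞), where F(x) = arctan(x)/π + 1/2 is the standard Cauchy cdf and G(x) = e^{−1/x} (x > 0) is the standard Fréchet cdf; equivalently, x ↦ G⁻¹(F(x)) is convex, i.e. F ≤_skew G. -/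
open MeasureTheory

/-- The generalized inverse (quantile function) `F⁻¹ (u) = inf {x : F x ≥ u}` of a cdf. -/
noncomputable def genInv (F : ℝ → ℝ) (u : ℝ) : ℝ :=
  sInf {x : ℝ | u ≤ F x}

/-- The standard Fréchet cdf: `G x = exp (-1/x)` for `x > 0`, and `0` for `x ≤ 0`. -/
noncomputable def frechetCDF (x : ℝ) : ℝ :=
  if 0 < x then Real.exp (-1 / x) else 0

open Real Set


-- Lemma A: for 0 < u ≤ 1, 2*u*(-log u) ≤ 1 - u^2
lemma log_aux {u : ℝ} (h0 : 0 < u) (h1 : u ≤ 1) : 2 * u * (-Real.log u) ≤ 1 - u ^ 2 := by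
  have key : ∀ v ∈ Set.Ioc (0:ℝ) 1, (1:ℝ) - v ^ 2 + 2 * v * Real.log v ≥ 0 := by
    have anti : AntitoneOn (fun v : ℝ => 1 - v ^ 2 + 2 * v * Real.log v) (Set.Ioc (0:ℝ) 1) := by
      apply antitoneOn_of_hasDerivWithinAt_nonpos (convex_Ioc 0 1)
      · apply ContinuousOn.add
        · fun_prop
        · apply ContinuousOn.mul (by fun_prop)
          exact Real.continuousOn_log.mono (by intro v hv; exact ne_of_gt hv.1)
      · intro v hv
        rw [interior_Ioc] at hv
        have hv0 : (0:ℝ) < v := hv.1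
        have : HasDerivAt (fun v : ℝ => 1 - v ^ 2 + 2 * v * Real.log v)
            (-(2*v) + (2 * Real.log v + 2 * v * v⁻¹)) v := by
          have h₁ : HasDerivAt (fun v : ℝ => 1 - v ^ 2) (-(2*v)) v := by
            simpa using ((hasDerivAt_pow 2 v).const_sub 1)
          have h₂ : HasDerivAt (fun v : ℝ => 2 * v * Real.log v)
              (2 * Real.log v + 2 * v * v⁻¹) v := by
            have := ((hasDerivAt_id v).const_mul (2:ℝ)).mul (Real.hasDerivAt_log (ne_of_gt hv0))
            exact this.congr_deriv (by simp only [id]; ring)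
          exact h₁.add h₂
        exact (this.hasDerivWithinAt)
      · intro v hv
        rw [interior_Ioc] at hv
        have hv0 : (0:ℝ) < v := hv.1
        have hlog : Real.log v ≤ v - 1 := Real.log_le_sub_one_of_pos hv0
        have : 2 * v * v⁻¹ = 2 := by field_simp
        rw [this]
        nlinarith
    intro v hv
    have := anti hv (Set.mem_Ioc.2 ⟨one_pos, le_refl 1⟩) hv.2
    simpa using this
  have := key u ⟨h0, h1⟩
  nlinarith

-- Lemma B: for r ∈ [0, π], r cos r ≤ sin r
lemma sin_sub_aux {r : ℝ} (h0 : 0 ≤ r) (h1 : r ≤ Real.pi) : r * Real.cos r ≤ Real.sin r := by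
  have mono : MonotoneOn (fun r : ℝ => Real.sin r - r * Real.cos r) (Set.Icc 0 Real.pi) := by
    apply monotoneOn_of_hasDerivWithinAt_nonneg (convex_Icc 0 Real.pi)
      (f' := fun r => r * Real.sin r)
    · fun_prop
    · intro r hr
      have : HasDerivAt (fun r : ℝ => Real.sin r - r * Real.cos r) (r * Real.sin r) r := by
        have h₁ := Real.hasDerivAt_sin r
        have h₂ : HasDerivAt (fun r : ℝ => r * Real.cos r) (Real.cos r + r * (-Real.sin r)) r := by
          have := (hasDerivAt_id r).mul (Real.hasDerivAt_cos r)
          exact this.congr_deriv (by simp)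
        have := h₁.sub h₂
        exact this.congr_deriv (by ring)
      exact this.hasDerivWithinAt
    · intro r hr
      rw [interior_Icc] at hr
      have : 0 ≤ Real.sin r := Real.sin_nonneg_of_nonneg_of_le_pi hr.1.le hr.2.le
      exact mul_nonneg hr.1.le this
  have := mono (Set.mem_Icc.2 ⟨le_refl 0, Real.pi_pos.le⟩) (Set.mem_Icc.2 ⟨h0, h1⟩) h0
  simpa using this

-- Lemma C: for r ∈ [0, π], 3 r cos r ≤ (3 - r²) sin r
lemma cot_aux {r : ℝ} (h0 : 0 ≤ r) (h1 : r ≤ Real.pi) :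
    3 * r * Real.cos r ≤ (3 - r ^ 2) * Real.sin r := by
  have mono : MonotoneOn (fun r : ℝ => (3 - r ^ 2) * Real.sin r - 3 * r * Real.cos r)
      (Set.Icc 0 Real.pi) := by
    apply monotoneOn_of_hasDerivWithinAt_nonneg (convex_Icc 0 Real.pi)
      (f' := fun r => r * (Real.sin r - r * Real.cos r))
    · fun_prop
    · intro r hr
      have h₁ : HasDerivAt (fun r : ℝ => (3 - r ^ 2) * Real.sin r)
          ((-(2*r)) * Real.sin r + (3 - r ^ 2) * Real.cos r) r := by
        have := ((hasDerivAt_pow 2 r).const_sub 3).mul (Real.hasDerivAt_sin r)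
        exact this.congr_deriv (by simp)
      have h₂ : HasDerivAt (fun r : ℝ => 3 * r * Real.cos r)
          (3 * Real.cos r + 3 * r * (-Real.sin r)) r := by
        have := ((hasDerivAt_id r).const_mul (3:ℝ)).mul (Real.hasDerivAt_cos r)
        simp only [id] at this
        exact this.congr_deriv (by ring)
      have := h₁.sub h₂
      have heq : (-(2*r)) * Real.sin r + (3 - r ^ 2) * Real.cos r -
          (3 * Real.cos r + 3 * r * (-Real.sin r)) = r * (Real.sin r - r * Real.cos r) := by ring
      rw [heq] at this
      exact this.hasDerivWithinAt
    · intro r hr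
      rw [interior_Icc] at hr
      have h := sin_sub_aux hr.1.le hr.2.le
      nlinarith [hr.1.le]
  have := mono (Set.mem_Icc.2 ⟨le_refl 0, Real.pi_pos.le⟩) (Set.mem_Icc.2 ⟨h0, h1⟩) h0
  simpa using this

lemma key_ineq {u : ℝ} (h0 : 0 < u) (h1 : u < 1) :
    (-Real.log u) * (Real.sin (π * u) - 2 * π * u * Real.cos (π * u)) ≤
      2 * Real.sin (π * u) := by
  have hπ := Real.pi_gt_d6
  have hs0 : 0 < π * u := by positivity
  have hsπ : π * u < π := by nlinarith
  have hsin : 0 < Real.sin (π * u) := Real.sin_pos_of_pos_of_lt_pi hs0 hsπ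
  have hL : 0 < -Real.log u := by
    have := Real.log_neg h0 h1
    linarith
  rcases le_or_gt (π * u) 1 with hcase | hcase
  · -- small s case: sin s - 2s cos s ≤ 0
    have hsle : Real.sin (π * u) ≤ π * u := Real.sin_le hs0.le
    have hcge : 1 - (π * u) ^ 2 / 2 ≤ Real.cos (π * u) := Real.one_sub_sq_div_two_le_cos
    have h2 : Real.sin (π * u) - 2 * π * u * Real.cos (π * u) ≤ 0 := by nlinarith
    nlinarith [mul_nonneg hL.le (neg_nonneg.2 h2)]
  · -- large s case
    set r : ℝ := π - π * u with hr
    clear_value r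
    have hπu : π * u = π - r := by rw [hr]; ring
    have hr0 : 0 < r := by rw [hr]; linarith
    have hrlt : r < π - 1 := by rw [hr]; linarith
    have hrπ : r ≤ π := by linarith
    have hsinr : 0 < Real.sin r := Real.sin_pos_of_pos_of_lt_pi hr0 (by linarith)
    have hsin_eq : Real.sin (π * u) = Real.sin r := by rw [hπu, Real.sin_pi_sub]
    have hcos_eq : Real.cos (π * u) = -Real.cos r := by rw [hπu, Real.cos_pi_sub]
    rw [hsin_eq, hcos_eq]
    set L : ℝ := -Real.log u with hLdef
    clear_value L
    set B : ℝ := Real.sin r + 2 * (π - r) * Real.cos r with hB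
    clear_value B
    have htarget_eq : Real.sin r - 2 * π * u * -Real.cos r = B := by
      rw [hB, ← hπu]; ring
    rw [htarget_eq]
    rcases le_or_gt B 0 with hBle | hBpos
    · nlinarith [mul_nonneg hL.le (neg_nonneg.2 hBle)]
    · have hA : 2 * u * L ≤ 1 - u ^ 2 := by rw [hLdef]; exact log_aux h0 h1.le
      have hC : 3 * r * Real.cos r ≤ (3 - r ^ 2) * Real.sin r := cot_aux hr0.le hrπ
      have hu2 : 0 < 1 - u ^ 2 := by nlinarith
      -- step 1: 6*u*r*(L*B) ≤ 3*r*(1-u^2)*B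
      have step1 : 6 * u * r * (L * B) ≤ 3 * r * ((1 - u ^ 2) * B) := by
        have := mul_le_mul_of_nonneg_right hA (le_of_lt (by positivity : (0:ℝ) < 3 * r * B))
        nlinarith [this]
      -- step 2: 3*r*B ≤ (3*r + 2*(π-r)*(3-r^2)) * sin r
      have step2 : 3 * r * B ≤ (3 * r + 2 * (π - r) * (3 - r ^ 2)) * Real.sin r := by
        have hfac : (0:ℝ) ≤ 2 * (π - r) := by linarith
        have := mul_le_mul_of_nonneg_left hC hfac
        rw [hB]; nlinarith [this]
      -- step 3: polynomial inequality
      have step3 : (1 - u ^ 2) * (3 * r + 2 * (π - r) * (3 - r ^ 2)) ≤ 12 * u * r := by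
        have hrr : 0 ≤ r ^ 2 * (2 * r ^ 2 - 6 * π * r + 4 * π ^ 2 - 3) := by
          have : 0 ≤ 2 * r ^ 2 - 6 * π * r + 4 * π ^ 2 - 3 := by nlinarith
          positivity
        have e1 : π ^ 2 * (1 - u ^ 2) = r * (2 * π - r) := by
          linear_combination (-(π * u) - (π - r)) * hπu
        have main : π ^ 2 * ((1 - u ^ 2) * (3 * r + 2 * (π - r) * (3 - r ^ 2))) ≤
            π ^ 2 * (12 * u * r) := by
          have e2 : π ^ 2 * (12 * u * r) = 12 * r * π * (π - r) := by
            linear_combination (12 * r * π) * hπu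
          rw [e2, show π ^ 2 * ((1 - u ^ 2) * (3 * r + 2 * (π - r) * (3 - r ^ 2))) =
            (π ^ 2 * (1 - u ^ 2)) * (3 * r + 2 * (π - r) * (3 - r ^ 2)) from by ring, e1]
          nlinarith [mul_nonneg hr0.le hrr]
        exact le_of_mul_le_mul_left main (by positivity)
      -- combine
      have hcomb : 6 * u * r * (L * B) ≤ 6 * u * r * (2 * Real.sin r) := by
        calc 6 * u * r * (L * B) ≤ 3 * r * ((1 - u ^ 2) * B) := step1
          _ = (1 - u ^ 2) * (3 * r * B) := by ring
          _ ≤ (1 - u ^ 2) * ((3 * r + 2 * (π - r) * (3 - r ^ 2)) * Real.sin r) :=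
              mul_le_mul_of_nonneg_left step2 hu2.le
          _ = ((1 - u ^ 2) * (3 * r + 2 * (π - r) * (3 - r ^ 2))) * Real.sin r := by ring
          _ ≤ (12 * u * r) * Real.sin r := mul_le_mul_of_nonneg_right step3 hsinr.le
          _ = 6 * u * r * (2 * Real.sin r) := by ring
      have hpos : (0:ℝ) < 6 * u * r := by positivity
      exact le_of_mul_le_mul_left hcomb hpos

noncomputable def th (x : ℝ) : ℝ := π * Real.exp (-1 / x) - π / 2

noncomputable def f1 (x : ℝ) : ℝ :=
  (1 + Real.tan (th x) ^ 2) * (π * Real.exp (-1 / x) * (x ^ 2)⁻¹)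

noncomputable def f2 (x : ℝ) : ℝ :=
  (1 + Real.tan (th x) ^ 2) * (π * Real.exp (-1 / x)) / x ^ 4 *
    (2 * Real.tan (th x) * (π * Real.exp (-1 / x)) + (1 - 2 * x))

lemma exp_lt_one' {x : ℝ} (hx : 0 < x) : Real.exp (-1 / x) < 1 :=
  Real.exp_lt_one_iff.2 (div_neg_of_neg_of_pos (by norm_num) hx)

lemma hasDerivAt_neg_one_div {x : ℝ} (hx : x ≠ 0) :
    HasDerivAt (fun y : ℝ => -1 / y) ((x ^ 2)⁻¹) x := by
  have h := (hasDerivAt_inv hx).neg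
  have heq : (fun y : ℝ => -1 / y) = fun y : ℝ => -(y⁻¹) := by
    funext y; rw [neg_div, one_div]
  rw [heq]
  exact h.congr_deriv (neg_neg _)

lemma th_hasDeriv {x : ℝ} (hx : 0 < x) :
    HasDerivAt th (π * Real.exp (-1 / x) * (x ^ 2)⁻¹) x := by
  have h := ((hasDerivAt_neg_one_div hx.ne').exp.const_mul π).sub_const (π / 2)
  exact h.congr_deriv (by ring)

lemma cos_th_pos {x : ℝ} (hx : 0 < x) : 0 < Real.cos (th x) := by
  have h1 : 0 < Real.exp (-1 / x) := Real.exp_pos _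
  have h2 := exp_lt_one' hx
  have hπ := Real.pi_pos
  apply Real.cos_pos_of_mem_Ioo
  constructor <;> [skip; skip] <;> simp only [th] <;> nlinarith

lemma tan_th {x : ℝ} : Real.tan (th x) =
    -Real.cos (π * Real.exp (-1 / x)) / Real.sin (π * Real.exp (-1 / x)) := by
  rw [th, Real.tan_eq_sin_div_cos, Real.sin_sub_pi_div_two, Real.cos_sub_pi_div_two]

lemma f_hasDeriv {x : ℝ} (hx : 0 < x) :
    HasDerivAt (fun y => Real.tan (π * Real.exp (-1 / y) - π / 2)) (f1 x) x := by
  have hcos := (cos_th_pos hx).ne'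
  have h := (Real.hasDerivAt_tan hcos).comp x (th_hasDeriv hx)
  have hid : (1:ℝ) / Real.cos (th x) ^ 2 = 1 + Real.tan (th x) ^ 2 := by
    rw [← Real.inv_one_add_tan_sq hcos, one_div, inv_inv]
  have h2 : (1 / Real.cos (th x) ^ 2) * (π * Real.exp (-1 / x) * (x ^ 2)⁻¹) = f1 x := by
    rw [f1, hid]
  rw [← h2]
  exact h

lemma f1_hasDeriv {x : ℝ} (hx : 0 < x) : HasDerivAt f1 (f2 x) x := by
  have htan : HasDerivAt (fun y => Real.tan (th y)) (f1 x) x := f_hasDeriv hx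
  have hA : HasDerivAt (fun y => 1 + Real.tan (th y) ^ 2)
      (2 * Real.tan (th x) ^ 1 * f1 x) x := (htan.pow 2).const_add 1
  have hB : HasDerivAt (fun y => π * Real.exp (-1 / y) * (y ^ 2)⁻¹)
      ((π * (Real.exp (-1 / x) * (x ^ 2)⁻¹)) * (x ^ 2)⁻¹ +
        (π * Real.exp (-1 / x)) * (-(2 * x ^ 1) / (x ^ 2) ^ 2)) x := by
    have hb1 := (hasDerivAt_neg_one_div hx.ne').exp.const_mul π
    have hb2 := (hasDerivAt_pow 2 x).inv (pow_ne_zero 2 hx.ne')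
    have := hb1.mul hb2
    exact this.congr_deriv (by norm_num)
  have hf := hA.mul hB
  have hfun : (fun y => (1 + Real.tan (th y) ^ 2) * (π * Real.exp (-1 / y) * (y ^ 2)⁻¹)) = f1 := by
    funext y; rw [f1]
  change HasDerivAt f1 _ x at hf
  convert hf using 1
  rw [f1, f2]
  have hx2 : x ≠ 0 := hx.ne'
  field_simp
  ring

lemma f2_nonpos {x : ℝ} (hx : 0 < x) : f2 x ≤ 0 := by
  have hu0 : 0 < Real.exp (-1 / x) := Real.exp_pos _
  have hu1 : Real.exp (-1 / x) < 1 := exp_lt_one' hx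
  have hπ := Real.pi_pos
  set u := Real.exp (-1 / x) with hu
  have hs0 : 0 < π * u := by positivity
  have hsπ : π * u < π := by nlinarith
  have hsin : 0 < Real.sin (π * u) := Real.sin_pos_of_pos_of_lt_pi hs0 hsπ
  have hkey := key_ineq hu0 hu1
  have hlog : -Real.log u = 1 / x := by
    rw [hu, Real.log_exp]; ring
  rw [hlog] at hkey
  -- S ≤ 2x sin
  have h7 : Real.sin (π * u) - 2 * π * u * Real.cos (π * u) ≤ 2 * x * Real.sin (π * u) := by
    have := mul_le_mul_of_nonneg_left hkey hx.le
    have hxx : x * (1 / x * (Real.sin (π * u) - 2 * π * u * Real.cos (π * u))) =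
        Real.sin (π * u) - 2 * π * u * Real.cos (π * u) := by
      field_simp
    rw [hxx] at this
    nlinarith
  have hfac : 2 * Real.tan (th x) * (π * u) + (1 - 2 * x) ≤ 0 := by
    rw [tan_th, ← hu]
    apply le_of_mul_le_mul_left _ hsin
    rw [mul_zero]
    have hcalc : Real.sin (π * u) *
        (2 * (-Real.cos (π * u) / Real.sin (π * u)) * (π * u) + (1 - 2 * x)) =
        (Real.sin (π * u) - 2 * π * u * Real.cos (π * u)) - 2 * x * Real.sin (π * u) := by
      field_simp
      ring
    rw [hcalc]
    linarith
  have hC : 0 ≤ (1 + Real.tan (th x) ^ 2) * (π * u) / x ^ 4 := by positivity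
  calc f2 x = (1 + Real.tan (th x) ^ 2) * (π * u) / x ^ 4 *
      (2 * Real.tan (th x) * (π * u) + (1 - 2 * x)) := by rw [f2, ← hu]
    _ ≤ 0 := mul_nonpos_of_nonneg_of_nonpos hC hfac

theorem part1 : ConcaveOn ℝ (Set.Ioi 0)
    (fun x => Real.tan (Real.pi * Real.exp (-1 / x) - Real.pi / 2)) := by
  apply concaveOn_of_hasDerivWithinAt2_nonpos (convex_Ioi 0) (f' := f1) (f'' := f2)
  · exact fun x hx => ((f_hasDeriv hx).continuousAt).continuousWithinAt
  · intro x hx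
    rw [interior_Ioi] at hx
    exact (f_hasDeriv hx).hasDerivWithinAt
  · intro x hx
    rw [interior_Ioi] at hx
    exact (f1_hasDeriv hx).hasDerivWithinAt
  · intro x hx
    rw [interior_Ioi] at hx
    exact f2_nonpos hx

lemma genInv_frechet {u : ℝ} (h0 : 0 < u) (h1 : u < 1) :
    genInv frechetCDF u = (-Real.log u)⁻¹ := by
  have hlog : Real.log u < 0 := Real.log_neg h0 h1
  have hL : 0 < -Real.log u := by linarith
  have ha : 0 < (-Real.log u)⁻¹ := by positivity
  have hset : {x : ℝ | u ≤ frechetCDF x} = Set.Ici (-Real.log u)⁻¹ := by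
    ext x
    simp only [Set.mem_setOf_eq, Set.mem_Ici, frechetCDF]
    constructor
    · intro hx
      by_cases hxpos : 0 < x
      · rw [if_pos hxpos] at hx
        have h2 : Real.log u ≤ -1 / x := (Real.log_le_iff_le_exp h0).2 hx
        have h3 : 1 / x ≤ -Real.log u := by
          have : -1 / x = -(1 / x) := by ring
          rw [this] at h2; linarith
        rw [inv_eq_one_div, div_le_iff₀ hL]
        have := mul_le_mul_of_nonneg_left h3 hxpos.le
        have hxx : x * (1 / x) = 1 := by field_simp
        rw [hxx] at this
        nlinarith
      · rw [if_neg hxpos] at hx; linarith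
    · intro hx
      have hxpos : 0 < x := lt_of_lt_of_le ha hx
      rw [if_pos hxpos]
      rw [← Real.exp_log h0]
      apply Real.exp_le_exp.2
      have h4 : 1 ≤ x * (-Real.log u) := by
        have := mul_le_mul_of_nonneg_right hx hL.le
        rw [inv_mul_cancel₀ hL.ne'] at this
        linarith
      have h5 : 1 / x ≤ -Real.log u := by
        rw [div_le_iff₀ hxpos]
        nlinarith
    /- goal: log u ≤ -1 / x -/
      have : -1 / x = -(1 / x) := by ring
      rw [this]
      linarith
  rw [genInv, hset, csInf_Ici]

-- Part 2 calculus
noncomputable def cauchyF (x : ℝ) : ℝ := Real.arctan x / π + 1 / 2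
noncomputable def cauchyL (x : ℝ) : ℝ := -Real.log (cauchyF x)
noncomputable def g1 (x : ℝ) : ℝ := (1 / (1 + x ^ 2) / π) / (cauchyF x * cauchyL x ^ 2)
noncomputable def g2 (x : ℝ) : ℝ :=
  (2 - cauchyL x * (1 + 2 * π * x * cauchyF x)) / ((π * (1 + x ^ 2)) ^ 2 * (cauchyF x ^ 2 * cauchyL x ^ 3))

lemma cauchyF_pos (x : ℝ) : 0 < cauchyF x := by
  have h := Real.neg_pi_div_two_lt_arctan x
  have hπ := Real.pi_pos
  rw [cauchyF]
  rw [div_add' _ _ _ hπ.ne', lt_div_iff₀ hπ]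
  nlinarith

lemma cauchyF_lt_one (x : ℝ) : cauchyF x < 1 := by
  have h := Real.arctan_lt_pi_div_two x
  have hπ := Real.pi_pos
  rw [cauchyF]
  rw [div_add' _ _ _ hπ.ne', div_lt_iff₀ hπ]
  nlinarith

lemma cauchyL_pos (x : ℝ) : 0 < cauchyL x := by
  have := Real.log_neg (cauchyF_pos x) (cauchyF_lt_one x)
  rw [cauchyL]; linarith

lemma cauchyF_hasDeriv (x : ℝ) : HasDerivAt cauchyF (1 / (1 + x ^ 2) / π) x := by
  have := ((Real.hasDerivAt_arctan x).div_const π).add_const (1 / 2)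
  exact this

lemma cauchyL_hasDeriv (x : ℝ) :
    HasDerivAt cauchyL (-((1 / (1 + x ^ 2) / π) / cauchyF x)) x := by
  exact ((cauchyF_hasDeriv x).log (cauchyF_pos x).ne').neg

lemma g_hasDeriv (x : ℝ) : HasDerivAt (fun y => (cauchyL y)⁻¹) (g1 x) x := by
  have h := (cauchyL_hasDeriv x).inv (cauchyL_pos x).ne'
  refine h.congr_deriv ?_
  symm
  rw [g1]
  have h1 : (0:ℝ) < 1 + x ^ 2 := by positivity
  have := Real.pi_pos
  field_simp

lemma g1_hasDeriv (x : ℝ) : HasDerivAt g1 (g2 x) x := by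
  have h1 : (0:ℝ) < 1 + x ^ 2 := by positivity
  have hπ := Real.pi_pos
  have hF := cauchyF_pos x
  have hL := cauchyL_pos x
  -- numerator derivative
  have hnum : HasDerivAt (fun y : ℝ => 1 / (1 + y ^ 2) / π)
      ((-(2 * x ^ 1) / (1 + x ^ 2) ^ 2) / π) x := by
    have ha : HasDerivAt (fun y : ℝ => 1 + y ^ 2) (2 * x ^ 1) x :=
      (hasDerivAt_pow 2 x).const_add 1
    have hb := ha.inv h1.ne'
    have := hb.div_const π
    rw [show (fun y : ℝ => 1 / (1 + y ^ 2) / π) = fun y => (1 + y ^ 2)⁻¹ / π from by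
      funext y; rw [one_div]]
    exact this
  -- denominator derivative
  have hden : HasDerivAt (fun y => cauchyF y * cauchyL y ^ 2)
      ((1 / (1 + x ^ 2) / π) * cauchyL x ^ 2 +
        cauchyF x * (2 * cauchyL x ^ 1 * (-((1 / (1 + x ^ 2) / π) / cauchyF x)))) x :=
    (cauchyF_hasDeriv x).mul ((cauchyL_hasDeriv x).pow 2)
  have hDne : cauchyF x * cauchyL x ^ 2 ≠ 0 := by positivity
  have h := hnum.div hden hDne
  have hLne : Real.log (cauchyF x) ≠ 0 := by
    have : cauchyL x = -Real.log (cauchyF x) := rfl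
    rw [this] at hL
    intro h0; rw [h0] at hL; norm_num at hL
  have hL' : cauchyL x = -Real.log (cauchyF x) := rfl
  refine h.congr_deriv ?_
  symm
  rw [g2, hL']
  generalize Real.log (cauchyF x) = l at hLne ⊢
  generalize hb : cauchyF x = b
  have hbne : b ≠ 0 := by rw [← hb]; exact hF.ne'
  have hd1 : ((π * (1 + x ^ 2)) ^ 2 * (b ^ 2 * (-l) ^ 3)) ≠ 0 :=
    mul_ne_zero (pow_ne_zero _ (mul_ne_zero hπ.ne' h1.ne'))
      (mul_ne_zero (pow_ne_zero _ hbne) (pow_ne_zero _ (neg_ne_zero.2 hLne)))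
  have hd2 : ((b * (-l) ^ 2) ^ 2) ≠ 0 :=
    pow_ne_zero _ (mul_ne_zero hbne (pow_ne_zero _ (neg_ne_zero.2 hLne)))
  rw [div_eq_div_iff hd1 hd2]
  field_simp
  ring

lemma g2_nonneg (x : ℝ) : 0 ≤ g2 x := by
  have hπ := Real.pi_pos
  have hF0 := cauchyF_pos x
  have hF1 := cauchyF_lt_one x
  have hL := cauchyL_pos x
  have hs0 : 0 < π * cauchyF x := by positivity
  have hsπ : π * cauchyF x < π := by nlinarith
  have hsin : 0 < Real.sin (π * cauchyF x) := Real.sin_pos_of_pos_of_lt_pi hs0 hsπ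
  have hkey := key_ineq hF0 hF1
  -- x * sin (π cauchyF) = -cos (π cauchyF)
  have harc : π * cauchyF x = Real.arctan x + π / 2 := by
    rw [cauchyF]; field_simp
  have hxs : x * Real.sin (π * cauchyF x) = -Real.cos (π * cauchyF x) := by
    rw [harc, Real.sin_add_pi_div_two, Real.cos_add_pi_div_two]
    have hc := Real.cos_arctan_pos x
    have ht : Real.tan (Real.arctan x) = x := Real.tan_arctan x
    rw [Real.tan_eq_sin_div_cos] at ht
    field_simp at ht
    rw [neg_neg]
    linarith [ht]
  -- cauchyL (1 + 2π x cauchyF) ≤ 2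
  have hmain : cauchyL x * (1 + 2 * π * x * cauchyF x) ≤ 2 := by
    have hre : Real.sin (π * cauchyF x) - 2 * π * cauchyF x * Real.cos (π * cauchyF x) =
        Real.sin (π * cauchyF x) * (1 + 2 * π * x * cauchyF x) := by
      have : Real.cos (π * cauchyF x) = -(x * Real.sin (π * cauchyF x)) := by linarith [hxs]
      rw [this]; ring
    rw [hre] at hkey
    have hL' : cauchyL x = -Real.log (cauchyF x) := rfl
    rw [← hL'] at hkey
    have : cauchyL x * (Real.sin (π * cauchyF x) * (1 + 2 * π * x * cauchyF x)) =
        Real.sin (π * cauchyF x) * (cauchyL x * (1 + 2 * π * x * cauchyF x)) := by ring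
    rw [this] at hkey
    have h2 : Real.sin (π * cauchyF x) * (cauchyL x * (1 + 2 * π * x * cauchyF x)) ≤
        Real.sin (π * cauchyF x) * 2 := by linarith
    exact le_of_mul_le_mul_left h2 hsin
  rw [g2]
  apply div_nonneg (by linarith)
  positivity

theorem part2 : ConvexOn ℝ Set.univ
    (fun x => genInv frechetCDF (Real.arctan x / Real.pi + 1 / 2)) := by
  have hfun : (fun x => genInv frechetCDF (Real.arctan x / Real.pi + 1 / 2)) =
      fun x => (cauchyL x)⁻¹ := by
    funext x
    rw [show Real.arctan x / Real.pi + 1 / 2 = cauchyF x from rfl,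
      genInv_frechet (cauchyF_pos x) (cauchyF_lt_one x)]
    rfl
  rw [hfun]
  apply convexOn_of_hasDerivWithinAt2_nonneg convex_univ (f' := g1) (f'' := g2)
  · exact fun x _ => ((g_hasDeriv x).continuousAt).continuousWithinAt
  · intro x _
    exact (g_hasDeriv x).hasDerivWithinAt
  · intro x _
    exact (g1_hasDeriv x).hasDerivWithinAt
  · intro x _
    exact g2_nonneg x


/-- The standard Fréchet distribution is more skewed than the standard Cauchy distribution:
the function `h x = tan (π exp (-1/x) - π/2) = F⁻¹ (G x)` is concave on `(0, ∞)`, where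
`F x = arctan x / π + 1/2` is the standard Cauchy cdf and `G x = exp (-1/x)` (`x > 0`) is
the standard Fréchet cdf; equivalently, `x ↦ G⁻¹ (F x)` is convex, i.e. `F ≤_skew G`. -/
theorem stmt13 :
    ConcaveOn ℝ (Set.Ioi 0)
      (fun x => Real.tan (Real.pi * Real.exp (-1 / x) - Real.pi / 2)) ∧
    ConvexOn ℝ Set.univ
      (fun x => genInv frechetCDF (Real.arctan x / Real.pi + 1 / 2)) := by
  exact ⟨part1, part2⟩
end

section
/- If F is the cumulative distribution function of a nonnegative random variable with F(x) > 0 for all x > 0, and the function h_F(x) := −log(F(1/x)) is subadditive on (0, ∞) (i.e., h_F(x+y) ≤ h_F(x) + h_F(y) for all x, y > 0), then the distribution F belongs to the class D⁻. -/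
open MeasureTheory ProbabilityTheory

/-- Finite-sum version of the subadditivity hypothesis. -/
lemma hF_subadd_finset (F : ℝ → ℝ)
    (hsub : ∀ x y : ℝ, 0 < x → 0 < y →
      -Real.log (F (1 / (x + y))) ≤ -Real.log (F (1 / x)) + -Real.log (F (1 / y)))
    {ι : Type*} (S : Finset ι) (hS : S.Nonempty) (x : ι → ℝ) (hx : ∀ i ∈ S, 0 < x i) :
    -Real.log (F (1 / ∑ i ∈ S, x i)) ≤ ∑ i ∈ S, -Real.log (F (1 / x i)) := by
  induction hS using Finset.Nonempty.cons_induction with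
  | singleton a => simp
  | cons a s ha hs ih =>
    have hxa : 0 < x a := hx a (Finset.mem_cons_self a s)
    have hxs : ∀ i ∈ s, 0 < x i := fun i hi => hx i (Finset.mem_cons.2 (Or.inr hi))
    have hsum : 0 < ∑ i ∈ s, x i := Finset.sum_pos hxs hs
    rw [Finset.sum_cons, Finset.sum_cons]
    calc -Real.log (F (1 / (x a + ∑ i ∈ s, x i)))
        ≤ -Real.log (F (1 / x a)) + -Real.log (F (1 / ∑ i ∈ s, x i)) :=
          hsub _ _ hxa hsum
      _ ≤ -Real.log (F (1 / x a)) + ∑ i ∈ s, -Real.log (F (1 / x i)) :=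
          add_le_add_right (ih hxs) _

/-- If `F` is the cdf of a nonnegative random variable with `F x > 0` for `x > 0`, and
`h_F x = -log (F (1/x))` is subadditive on `(0, ∞)`, then the distribution belongs to
`D⁻`. -/
theorem stmt15 (μ : Measure ℝ) [IsProbabilityMeasure μ]
    (hnonneg : μ (Set.Iio 0) = 0)
    (F : ℝ → ℝ) (hF : ∀ t, F t = (μ (Set.Iic t)).toReal)
    (hpos : ∀ x : ℝ, 0 < x → 0 < F x)
    (hsub : ∀ x y : ℝ, 0 < x → 0 < y →
      -Real.log (F (1 / (x + y))) ≤ -Real.log (F (1 / x)) + -Real.log (F (1 / y))) :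
    IsDNeg μ := by
  intro n θ hθ hθ1 Ω _ hΩ X hXm hXmap hind t
  classical
  set S : Finset (Fin n) := Finset.univ.filter (fun i => 0 < θ i) with hSdef
  have hmemS : ∀ i, i ∈ S ↔ 0 < θ i := by
    intro i; simp [hSdef]
  have hSne : S.Nonempty := by
    by_contra h
    rw [Finset.not_nonempty_iff_eq_empty] at h
    have hz : ∀ i, θ i = 0 := by
      intro i
      have : ¬ 0 < θ i := by
        intro hlt
        have : i ∈ S := (hmemS i).2 hlt
        simp [h] at this
      linarith [hθ i]
    have : (1 : ℝ) = 0 := by rw [← hθ1]; exact Finset.sum_eq_zero fun i _ => hz i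
    norm_num at this
  have hSsum : ∑ i ∈ S, θ i = 1 := by
    rw [← hθ1]
    refine Finset.sum_subset (Finset.subset_univ S) ?_
    intro i _ hiS
    have : ¬ 0 < θ i := fun hlt => hiS ((hmemS i).2 hlt)
    linarith [hθ i]
  -- a.e. nonnegativity
  have hXae : ∀ᵐ ω ∂(ℙ : Measure Ω), ∀ i, 0 ≤ X i ω := by
    rw [ae_all_iff]
    intro i
    have h0 : (ℙ : Measure Ω) (X i ⁻¹' Set.Iio 0) = 0 := by
      rw [← Measure.map_apply (hXm i) measurableSet_Iio, hXmap i]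
      exact hnonneg
    rw [ae_iff]
    have : {ω | ¬ 0 ≤ X i ω} = X i ⁻¹' Set.Iio 0 := by
      ext ω; simp [not_le]
    rw [this]; exact h0
  have hfm : Measurable fun ω => ∑ i, θ i * X i ω :=
    Finset.measurable_sum Finset.univ fun i _ => (hXm i).const_mul (θ i)
  rw [Measure.map_apply hfm measurableSet_Iic]
  -- event inclusion
  have hincl : (ℙ : Measure Ω) ((fun ω => ∑ i, θ i * X i ω) ⁻¹' Set.Iic t)
      ≤ (ℙ : Measure Ω) (⋂ i ∈ S, X i ⁻¹' Set.Iic (t / θ i)) := by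
    refine measure_mono_ae ?_
    filter_upwards [hXae] with ω h0 hω
    have hω' : ∑ j, θ j * X j ω ≤ t := hω
    refine Set.mem_iInter₂.2 fun i hi => Set.mem_preimage.2 (Set.mem_Iic.2 ?_)
    have hθi : 0 < θ i := (hmemS i).1 hi
    have hle : θ i * X i ω ≤ ∑ j, θ j * X j ω :=
      Finset.single_le_sum (fun j _ => mul_nonneg (hθ j) (h0 j)) (Finset.mem_univ i)
    rw [le_div_iff₀ hθi, mul_comm]
    linarith
  have hindep : (ℙ : Measure Ω) (⋂ i ∈ S, X i ⁻¹' Set.Iic (t / θ i))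
      = ∏ i ∈ S, (ℙ : Measure Ω) (X i ⁻¹' Set.Iic (t / θ i)) := by
    refine hind.meas_biInter fun i _ => ?_
    exact ⟨Set.Iic (t / θ i), measurableSet_Iic, rfl⟩
  have hmapi : ∀ i (s : ℝ), (ℙ : Measure Ω) (X i ⁻¹' Set.Iic s) = μ (Set.Iic s) := by
    intro i s
    rw [← Measure.map_apply (hXm i) measurableSet_Iic, hXmap i]
  refine le_trans hincl ?_
  rw [hindep]
  simp_rw [hmapi]
  -- it remains to prove the product inequality
  rcases lt_trichotomy t 0 with ht | ht | ht
  · obtain ⟨i0, hi0⟩ := hSne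
    have hθi0 : 0 < θ i0 := (hmemS i0).1 hi0
    have hzero : μ (Set.Iic (t / θ i0)) = 0 := by
      refine measure_mono_null ?_ hnonneg
      intro x hx
      simp only [Set.mem_Iic] at hx
      have : t / θ i0 < 0 := div_neg_of_neg_of_pos ht hθi0
      exact Set.mem_Iio.2 (lt_of_le_of_lt hx this)
    rw [Finset.prod_eq_zero hi0 hzero]
    exact zero_le
  · obtain ⟨i0, hi0⟩ := hSne
    subst ht
    simp only [zero_div]
    calc ∏ _i ∈ S, μ (Set.Iic (0:ℝ)) = μ (Set.Iic (0:ℝ)) ^ S.card := by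
          rw [Finset.prod_const]
      _ ≤ μ (Set.Iic (0:ℝ)) := by
          obtain ⟨k, hk⟩ : ∃ k, S.card = k + 1 :=
            Nat.exists_eq_add_of_le' (Finset.card_pos.2 ⟨i0, hi0⟩)
          rw [hk, pow_succ]
          calc μ (Set.Iic (0:ℝ)) ^ k * μ (Set.Iic (0:ℝ))
              ≤ 1 * μ (Set.Iic (0:ℝ)) := mul_le_mul_left (pow_le_one' prob_le_one k) _
            _ = μ (Set.Iic (0:ℝ)) := one_mul _
  · -- t > 0 : the main case
    have hfin : ∀ s : ℝ, μ (Set.Iic s) ≠ ⊤ := fun s => measure_ne_top μ _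
    have hprod_ne_top : (∏ i ∈ S, μ (Set.Iic (t / θ i))) ≠ ⊤ :=
      (ENNReal.prod_lt_top fun i _ => lt_of_le_of_ne le_top (hfin _)).ne
    rw [← ENNReal.toReal_le_toReal hprod_ne_top (hfin t), ENNReal.toReal_prod]
    simp_rw [← hF]
    -- real inequality: ∏ F(t/θ i) ≤ F t
    have hxpos : ∀ i ∈ S, 0 < θ i / t := fun i hi => div_pos ((hmemS i).1 hi) ht
    have key := hF_subadd_finset F hsub S hSne (fun i => θ i / t) hxpos
    have hsumx : ∑ i ∈ S, θ i / t = 1 / t := by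
      rw [← Finset.sum_div, hSsum]
    rw [hsumx, one_div_one_div] at key
    have hrw : ∀ i ∈ S, 1 / (θ i / t) = t / θ i := fun i _ => one_div_div _ _
    rw [Finset.sum_congr rfl (fun i hi => by rw [hrw i hi])] at key
    -- key : -log (F t) ≤ ∑ i in S, -log (F (t / θ i))
    have hFpos : ∀ i ∈ S, 0 < F (t / θ i) := fun i hi =>
      hpos _ (div_pos ht ((hmemS i).1 hi))
    have hlogsum : Real.log (∏ i ∈ S, F (t / θ i)) = ∑ i ∈ S, Real.log (F (t / θ i)) :=
      Real.log_prod fun i hi => (hFpos i hi).ne'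
    have hsumlog : ∑ i ∈ S, Real.log (F (t / θ i)) ≤ Real.log (F t) := by
      have := key
      rw [Finset.sum_neg_distrib] at this
      linarith
    have hprodpos : 0 < ∏ i ∈ S, F (t / θ i) := Finset.prod_pos hFpos
    have := hlogsum ▸ hsumlog
    exact (Real.log_le_log_iff hprodpos (hpos t ht)).1 this
end

section
/- For the cdf F(x) = (2/π) arctan(x), x ≥ 0, of the absolute value of a standard Cauchy random variable, the function h_F(x) = −log(F(1/x)) = −log((2/π) arctan(1/x)) is not subadditive on (0, ∞): there exist x, y > 0 with h_F(x+y) > h_F(x) + h_F(y). In particular this distribution does not belong to the class H of distributions with subadditive h_F. -/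
/-!
Take `x = y = 1/4`. With `F t = (2/π) arctan t`, the claim becomes `F 2 < F 4 ^ 2`, i.e.
`π arctan 2 < 2 arctan² 4`. Writing `arctan t = π/2 - arctan t⁻¹`, this follows from
`arctan (1/4) ≤ 1/4` and from Machin's `arctan (1/2) = π/8 + arctan (1/7) / 2` together with
`arctan (1/7) ≥ 14/99`, as soon as `π > 3.14`.
-/

namespace Real

theorem arctan_le_self {x : ℝ} (hx : 0 ≤ x) : arctan x ≤ x := by
  simpa only [tan_arctan] using le_tan (arctan_nonneg.2 hx) (arctan_lt_pi_div_two x)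

theorem div_one_add_sq_div_two_le_arctan {x : ℝ} (hx : 0 ≤ x) :
    x / (1 + x ^ 2 / 2) ≤ arctan x := by
  have hsqrt : √(1 + x ^ 2) ≤ 1 + x ^ 2 / 2 :=
    sqrt_le_iff.2 ⟨by positivity, by nlinarith [sq_nonneg (x ^ 2)]⟩
  calc x / (1 + x ^ 2 / 2) ≤ x / √(1 + x ^ 2) :=
        div_le_div_of_nonneg_left hx (by positivity) hsqrt
    _ = sin (arctan x) := (sin_arctan x).symm
    _ ≤ arctan x := sin_le (arctan_nonneg.2 hx)

theorem pi_mul_arctan_two_lt_two_mul_sq_arctan_four : π * arctan 2 < 2 * arctan 4 ^ 2 := by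
  have h2 : arctan 2 = π / 2 - arctan 2⁻¹ := by
    rw [arctan_inv_of_pos two_pos]; ring
  have h4 : arctan 4 = π / 2 - arctan 4⁻¹ := by
    rw [arctan_inv_of_pos four_pos]; ring
  have machin : arctan 2⁻¹ = π / 8 + arctan 7⁻¹ / 2 := by
    linarith [two_mul_arctan_inv_2_sub_arctan_inv_7]
  have h7 : (14 : ℝ) / 99 ≤ arctan 7⁻¹ := by
    have := div_one_add_sq_div_two_le_arctan (x := 7⁻¹) (by norm_num)
    norm_num at this ⊢
    linarith
  have hv : arctan 4⁻¹ ≤ 4⁻¹ := arctan_le_self (by norm_num)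
  have hv0 : 0 ≤ arctan 4⁻¹ := arctan_nonneg.2 (by norm_num)
  rw [h2, h4, machin]
  nlinarith [pi_gt_d2, mul_nonneg (sub_nonneg.2 hv) (sub_nonneg.2 pi_gt_three.le)]

theorem neg_log_add_neg_log_lt_neg_log_of_lt_mul {a b c : ℝ} (hc : 0 < c) (h : c < a * b) :
    -log a + -log b < -log c := by
  have hab : a * b ≠ 0 := (hc.trans h).ne'
  rw [← neg_add, neg_lt_neg_iff, ← log_mul (left_ne_zero_of_mul hab) (right_ne_zero_of_mul hab)]
  exact log_lt_log hc h

end Real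

/-- For the cdf `F x = (2/π) arctan x`, `x ≥ 0`, of the absolute value of a standard
Cauchy random variable, the function `h_F x = -log (F (1/x)) = -log ((2/π) arctan (1/x))`
is not subadditive on `(0, ∞)`: there exist `x, y > 0` with `h_F (x + y) > h_F x + h_F y`.
In particular this distribution does not belong to the class `H` of distributions with
subadditive `h_F`. -/
theorem stmt17 :
    ∃ x y : ℝ, 0 < x ∧ 0 < y ∧
      -Real.log (2 / Real.pi * Real.arctan (1 / x)) +
        -Real.log (2 / Real.pi * Real.arctan (1 / y)) <
      -Real.log (2 / Real.pi * Real.arctan (1 / (x + y))) := by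
  refine ⟨1 / 4, 1 / 4, by norm_num, by norm_num, ?_⟩
  norm_num only [one_div_one_div]
  apply Real.neg_log_add_neg_log_lt_neg_log_of_lt_mul
  · exact mul_pos (by positivity) (Real.arctan_pos.2 two_pos)
  · field_simp
    exact Real.pi_mul_arctan_two_lt_two_mul_sq_arctan_four
end

section
/- If X is a nonnegative, non-degenerate real random variable and X_1, X_2 are i.i.d. copies of X, then it is NOT the case that (X_1 + X_2)/2 ≤_st X_1. In particular, the distribution of X does not belong to the class D⁺. -/
open MeasureTheory ProbabilityTheory

/-- The distribution (probability measure) `μ` on `ℝ` belongs to the class `D⁺` if for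
every `n`, all nonnegative weights `θ` summing to one, and i.i.d. random variables `X i`
with distribution `μ`, one has `∑ i, θ i * X i ≤_st X 1` in the usual stochastic order,
i.e. the cdf of the convex combination lies pointwise above the common cdf. -/
def IsDPlus (μ : Measure ℝ) : Prop :=
  ∀ (n : ℕ) (θ : Fin n → ℝ), (∀ i, 0 ≤ θ i) → ∑ i, θ i = 1 →
    ∀ (Ω : Type) [MeasureSpace Ω], IsProbabilityMeasure (ℙ : Measure Ω) →
      ∀ X : Fin n → Ω → ℝ, (∀ i, Measurable (X i)) →
        (∀ i, Measure.map (X i) ℙ = μ) →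
        iIndepFun (m := fun _ => Real.measurableSpace) X ℙ →
        ∀ t : ℝ, μ (Set.Iic t) ≤ Measure.map (fun ω => ∑ i, θ i * X i ω) ℙ (Set.Iic t)

set_option linter.unnecessarySimpa false in

lemma aux_notle (Ω : Type) [MeasureSpace Ω] [IsProbabilityMeasure (ℙ : Measure Ω)]
    (X₁ X₂ : Ω → ℝ) (h₁ : Measurable X₁) (h₂ : Measurable X₂)
    (hnn : ∀ᵐ ω ∂ℙ, 0 ≤ X₁ ω)
    (hid : Measure.map X₂ ℙ = Measure.map X₁ ℙ)
    (hindep : IndepFun X₁ X₂ ℙ)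
    (hnondeg : ¬ ∃ c : ℝ, Measure.map X₁ ℙ = Measure.dirac c) :
    ¬ (∀ t : ℝ, Measure.map X₁ ℙ (Set.Iic t) ≤
        Measure.map (fun ω => (X₁ ω + X₂ ω) / 2) ℙ (Set.Iic t)) := by
  intro H
  set Y : Ω → ℝ := fun ω => (X₁ ω + X₂ ω) / 2 with hY
  have hYm : Measurable Y := (h₁.add h₂).div_const 2
  have hP1 : IsProbabilityMeasure (Measure.map X₁ ℙ) :=
    Measure.isProbabilityMeasure_map h₁.aemeasurable
  have hPY : IsProbabilityMeasure (Measure.map Y ℙ) :=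
    Measure.isProbabilityMeasure_map hYm.aemeasurable
  -- Step A : Iio version of stochastic order
  have HIio : ∀ s : ℝ, Measure.map X₁ ℙ (Set.Iio s) ≤ Measure.map Y ℙ (Set.Iio s) := by
    intro s
    have hset : Set.Iio s = ⋃ n : ℕ, Set.Iic (s - 1 / (n + 1)) := by
      ext x
      simp only [Set.mem_Iio, Set.mem_iUnion, Set.mem_Iic]
      constructor
      · intro hx
        obtain ⟨n, hn⟩ := exists_nat_one_div_lt (sub_pos.2 hx)
        exact ⟨n, by linarith⟩
      · rintro ⟨n, hn⟩
        have : (0:ℝ) < 1 / (n + 1) := by positivity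
        linarith
    have hmono : Monotone fun n : ℕ => Set.Iic (s - 1 / ((n:ℝ) + 1)) := by
      intro a b hab
      apply Set.Iic_subset_Iic.2
      have hc : (a:ℝ) ≤ (b:ℝ) := Nat.cast_le.mpr hab
      have : (1:ℝ) / ((b:ℝ) + 1) ≤ 1 / ((a:ℝ) + 1) :=
        one_div_le_one_div_of_le (by positivity) (by linarith)
      linarith
    rw [hset, hmono.directed_le.measure_iUnion,
      hmono.directed_le.measure_iUnion]
    exact iSup_mono fun n => H _
  -- Step B : lintegral of exp(-2x) comparison
  have hfm : Measurable fun x : ℝ => Real.exp (-(2 * x)) :=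
    (Real.measurable_exp.comp (measurable_const.mul measurable_id).neg)
  have hB : ∫⁻ x, ENNReal.ofReal (Real.exp (-(2 * x))) ∂(Measure.map X₁ ℙ)
      ≤ ∫⁻ x, ENNReal.ofReal (Real.exp (-(2 * x))) ∂(Measure.map Y ℙ) := by
    rw [lintegral_eq_lintegral_meas_lt _ (Filter.Eventually.of_forall fun x => (Real.exp_pos _).le)
        hfm.aemeasurable,
      lintegral_eq_lintegral_meas_lt _ (Filter.Eventually.of_forall fun x => (Real.exp_pos _).le)
        hfm.aemeasurable]
    apply lintegral_mono
    intro t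
    dsimp only
    rcases le_or_gt t 0 with ht | ht
    · have h1 : {a : ℝ | t < Real.exp (-(2 * a))} = Set.univ := by
        ext a; simp only [Set.mem_setOf_eq, Set.mem_univ, iff_true]
        exact lt_of_le_of_lt ht (Real.exp_pos _)
      rw [h1]; simp [measure_univ]
    · have h1 : {a : ℝ | t < Real.exp (-(2 * a))} = Set.Iio (-(Real.log t) / 2) := by
        ext a
        simp only [Set.mem_setOf_eq, Set.mem_Iio]
        rw [← Real.log_lt_iff_lt_exp ht]
        constructor <;> intro <;> linarith
      rw [h1]; exact HIio _
  -- Step C : rewrite via pushforward and independence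
  set u : Ω → ℝ := fun ω => Real.exp (-(X₁ ω)) with hu
  set v : Ω → ℝ := fun ω => Real.exp (-(X₂ ω)) with hv
  have hum : Measurable u := Real.measurable_exp.comp h₁.neg
  have hvm : Measurable v := Real.measurable_exp.comp h₂.neg
  have hLHS : ∫⁻ x, ENNReal.ofReal (Real.exp (-(2 * x))) ∂(Measure.map X₁ ℙ)
      = ∫⁻ ω, ENNReal.ofReal (u ω * u ω) ∂ℙ := by
    rw [lintegral_map hfm.ennreal_ofReal h₁]
    apply lintegral_congr
    intro ω
    congr 1
    rw [show -(2 * X₁ ω) = -(X₁ ω) + -(X₁ ω) by ring, Real.exp_add]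
  have hRHS : ∫⁻ x, ENNReal.ofReal (Real.exp (-(2 * x))) ∂(Measure.map Y ℙ)
      = (∫⁻ ω, ENNReal.ofReal (u ω) ∂ℙ) * ∫⁻ ω, ENNReal.ofReal (v ω) ∂ℙ := by
    rw [lintegral_map hfm.ennreal_ofReal hYm]
    have : ∀ ω, ENNReal.ofReal (Real.exp (-(2 * Y ω)))
        = ENNReal.ofReal (u ω) * ENNReal.ofReal (v ω) := by
      intro ω
      rw [← ENNReal.ofReal_mul (Real.exp_pos _).le, ← Real.exp_add]
      congr 2
      simp only [hY]
      ring
    rw [lintegral_congr this]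
    exact lintegral_mul_eq_lintegral_mul_lintegral_of_indepFun
      hum.ennreal_ofReal hvm.ennreal_ofReal
      (hindep.comp ((Real.measurable_exp.comp measurable_neg).ennreal_ofReal)
        ((Real.measurable_exp.comp measurable_neg).ennreal_ofReal))
  have hvu : ∫⁻ ω, ENNReal.ofReal (v ω) ∂ℙ = ∫⁻ ω, ENNReal.ofReal (u ω) ∂ℙ := by
    have hφ : Measurable fun x : ℝ => ENNReal.ofReal (Real.exp (-x)) :=
      (Real.measurable_exp.comp measurable_neg).ennreal_ofReal
    calc ∫⁻ ω, ENNReal.ofReal (v ω) ∂ℙ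
        = ∫⁻ x, ENNReal.ofReal (Real.exp (-x)) ∂(Measure.map X₂ ℙ) :=
          (lintegral_map hφ h₂).symm
      _ = ∫⁻ x, ENNReal.ofReal (Real.exp (-x)) ∂(Measure.map X₁ ℙ) := by rw [hid]
      _ = ∫⁻ ω, ENNReal.ofReal (u ω) ∂ℙ := lintegral_map hφ h₁
  rw [hLHS, hRHS, hvu] at hB
  -- Step D : convert to real integrals
  have hub : ∀ᵐ ω ∂ℙ, u ω ≤ 1 := by
    filter_upwards [hnn] with ω hω
    show Real.exp (-X₁ ω) ≤ 1
    exact Real.exp_le_one_iff.2 (by linarith)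
  have huint : Integrable u ℙ := by
    refine (integrable_const (1:ℝ)).mono' hum.aestronglyMeasurable ?_
    filter_upwards [hub] with ω hω
    rw [Real.norm_eq_abs, abs_of_pos (Real.exp_pos _)]
    exact hω
  have hu2int : Integrable (fun ω => u ω * u ω) ℙ := by
    refine (integrable_const (1:ℝ)).mono' (hum.mul hum).aestronglyMeasurable ?_
    filter_upwards [hub] with ω hω
    rw [Real.norm_eq_abs, abs_of_pos (mul_pos (Real.exp_pos _) (Real.exp_pos _))]
    exact mul_le_one₀ hω (Real.exp_pos _).le hω
  have hupos : ∀ ω, 0 < u ω := fun ω => Real.exp_pos _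
  have hunn : 0 ≤ᵐ[ℙ] u := Filter.Eventually.of_forall fun ω => (hupos ω).le
  set m : ℝ := ∫ ω, u ω ∂ℙ with hm
  have hmnn : 0 ≤ m := integral_nonneg fun ω => (hupos ω).le
  have hconv1 : ENNReal.ofReal (∫ ω, u ω * u ω ∂ℙ)
      = ∫⁻ ω, ENNReal.ofReal (u ω * u ω) ∂ℙ :=
    ofReal_integral_eq_lintegral_ofReal hu2int
      (Filter.Eventually.of_forall fun ω => (mul_pos (hupos ω) (hupos ω)).le)
  have hconv2 : ENNReal.ofReal m = ∫⁻ ω, ENNReal.ofReal (u ω) ∂ℙ :=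
    ofReal_integral_eq_lintegral_ofReal huint hunn
  have hD : ∫ ω, u ω * u ω ∂ℙ ≤ m * m := by
    rw [← ENNReal.ofReal_le_ofReal_iff (mul_nonneg hmnn hmnn), hconv1,
      ENNReal.ofReal_mul hmnn, hconv2]
    exact hB
  -- Step E : equality case of Cauchy-Schwarz
  have hsqint : Integrable (fun ω => (u ω - m) ^ 2) ℙ := by
    have : (fun ω => (u ω - m) ^ 2)
        = fun ω => u ω * u ω - 2 * m * u ω + m ^ 2 := by
      funext ω; ring
    rw [this]
    exact (hu2int.sub (huint.const_mul (2 * m))).add (integrable_const _)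
  have hEint : ∫ ω, (u ω - m) ^ 2 ∂ℙ = ∫ ω, u ω * u ω ∂ℙ - m * m := by
    have : (fun ω => (u ω - m) ^ 2)
        = fun ω => u ω * u ω - 2 * m * u ω + m ^ 2 := by
      funext ω; ring
    have hint1 : Integrable (fun ω => u ω * u ω - 2 * m * u ω) ℙ :=
      hu2int.sub (huint.const_mul (2 * m))
    rw [this, integral_add hint1 (integrable_const _),
      integral_sub hu2int (huint.const_mul (2 * m)), integral_const_mul, ← hm,
      integral_const, probReal_univ]
    simp only [ENNReal.toReal_one, one_smul, smul_eq_mul]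
    ring
  have hE0 : ∫ ω, (u ω - m) ^ 2 ∂ℙ = 0 :=
    le_antisymm (by rw [hEint]; linarith)
      (integral_nonneg fun ω => sq_nonneg _)
  have hae : ∀ᵐ ω ∂ℙ, u ω = m := by
    have := (integral_eq_zero_iff_of_nonneg (fun ω => sq_nonneg (u ω - m)) hsqint).1 hE0
    filter_upwards [this] with ω hω
    have : (u ω - m) ^ 2 = 0 := hω
    nlinarith [sq_nonneg (u ω - m)]
  have haeX : ∀ᵐ ω ∂ℙ, X₁ ω = -Real.log m := by
    filter_upwards [hae] with ω hω
    have : Real.log (u ω) = Real.log m := by rw [hω]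
    rw [hu] at this
    simp only [Real.log_exp] at this
    linarith
  apply hnondeg
  refine ⟨-Real.log m, ?_⟩
  calc Measure.map X₁ ℙ = Measure.map (fun _ => -Real.log m) ℙ :=
        Measure.map_congr haeX
    _ = Measure.dirac (-Real.log m) := by
        rw [Measure.map_const]
        simp


/-- If `X` is a nonnegative non-degenerate real random variable and `X₁, X₂` are i.i.d.
copies of `X`, then it is not the case that `(X₁ + X₂)/2 ≤_st X₁`; in particular the
distribution of `X` does not belong to the class `D⁺`. -/
theorem stmt18 (Ω : Type) [MeasureSpace Ω] [IsProbabilityMeasure (ℙ : Measure Ω)]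
    (X₁ X₂ : Ω → ℝ) (h₁ : Measurable X₁) (h₂ : Measurable X₂)
    (hnn : ∀ᵐ ω ∂ℙ, 0 ≤ X₁ ω)
    (hid : Measure.map X₂ ℙ = Measure.map X₁ ℙ)
    (hindep : IndepFun X₁ X₂ ℙ)
    (hnondeg : ¬ ∃ c : ℝ, Measure.map X₁ ℙ = Measure.dirac c) :
    ¬ (∀ t : ℝ, Measure.map X₁ ℙ (Set.Iic t) ≤
        Measure.map (fun ω => (X₁ ω + X₂ ω) / 2) ℙ (Set.Iic t)) ∧
    ¬ IsDPlus (Measure.map X₁ ℙ) := by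
  have notle : ¬ (∀ t : ℝ, Measure.map X₁ ℙ (Set.Iic t) ≤
      Measure.map (fun ω => (X₁ ω + X₂ ω) / 2) ℙ (Set.Iic t)) :=
    aux_notle Ω X₁ X₂ h₁ h₂ hnn hid hindep hnondeg
  refine ⟨notle, fun hD => notle ?_⟩
  intro t
  have hiid : iIndepFun (m := fun _ => Real.measurableSpace) ![X₁, X₂] ℙ := by
    rw [iIndepFun_iff_measure_inter_preimage_eq_mul]
    intro S sets hS
    have hS4 : ∀ T : Finset (Fin 2), T = ∅ ∨ T = {0} ∨ T = {1} ∨ T = {0, 1} := by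
      decide
    rcases hS4 S with rfl | rfl | rfl | rfl
    · simp
    · simp
    · simp
    · have := hindep.measure_inter_preimage_eq_mul (sets 0) (sets 1)
        (hS 0 (by decide)) (hS 1 (by decide))
      simpa [Finset.mem_insert, Set.iInter_iInter_eq_or_left] using this
  have key := hD 2 ![1/2, 1/2] (by intro i; fin_cases i <;> norm_num)
    (by simp [Fin.sum_univ_two]; norm_num) Ω ‹_› ![X₁, X₂]
    (by intro i; fin_cases i <;> simpa)
    (by intro i; fin_cases i <;> simpa) hiid t
  have hfun : (fun ω => ∑ i, ![(1:ℝ)/2, 1/2] i * ![X₁, X₂] i ω)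
      = fun ω => (X₁ ω + X₂ ω) / 2 := by
    funext ω
    simp [Fin.sum_univ_two]
    ring
  rwa [hfun] at key
end

section
/- Let X_1, X_2 be i.i.d. nonnegative real random variables with P(0 ≤ X_1 ≤ 2) = 0.4 and P(2 < X_1 ≤ 4) = 0.4. Then P((X_1 + X_2)/2 ≤ 3) ≥ 0.48. Consequently, any distribution F of a nonnegative random variable with F(2) = 0.4, F(4) = 0.8 and F(3) < 0.48 does not belong to the class D⁻. -/
open MeasureTheory ProbabilityTheory

lemma pi_marginal {ι : Type} [Fintype ι] [DecidableEq ι] (μ : ι → Measure ℝ)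
    [∀ i, IsProbabilityMeasure (μ i)] (i : ι) :
    Measure.map (fun ω : ι → ℝ => ω i) (Measure.pi μ) = μ i := by
  ext s hs
  rw [Measure.map_apply (measurable_pi_apply i) hs]
  have : (fun ω : ι → ℝ => ω i) ⁻¹' s
      = Set.pi Set.univ (Function.update (fun _ => Set.univ) i s) := by
    ext x
    simp only [Set.mem_preimage, Set.mem_pi, Set.mem_univ, true_implies]
    constructor
    · intro hx j
      rcases eq_or_ne j i with rfl | hj
      · simpa using hx
      · simp [Function.update_of_ne hj]
    · intro h
      have := h i
      simpa using this
  rw [this, Measure.pi_pi]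
  rw [Finset.prod_eq_single i]
  · simp
  · intro j _ hj
    simp [Function.update_of_ne hj]
  · simp

lemma pi_eval_iIndep {ι : Type} [Fintype ι] [DecidableEq ι] (μ : ι → Measure ℝ)
    [∀ i, IsProbabilityMeasure (μ i)] :
    iIndepFun (fun (i : ι) (ω : ι → ℝ) => ω i)
      (Measure.pi μ) := by
  rw [iIndepFun_iff_measure_inter_preimage_eq_mul]
  intro S sets hsets
  have h1 : (⋂ i ∈ S, (fun ω : ι → ℝ => ω i) ⁻¹' sets i)
      = Set.pi Set.univ (fun j => if j ∈ S then sets j else Set.univ) := by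
    ext x
    simp only [Set.mem_iInter, Set.mem_preimage, Set.mem_pi, Set.mem_univ, true_implies]
    constructor
    · intro h j
      by_cases hj : j ∈ S
      · simp [hj, h j hj]
      · simp [hj]
    · intro h j hj
      have := h j
      simpa [hj] using this
  rw [h1, Measure.pi_pi]
  have h2 : ∀ j, μ j (if j ∈ S then sets j else Set.univ)
      = if j ∈ S then μ j (sets j) else 1 := by
    intro j; by_cases hj : j ∈ S <;> simp [hj]
  simp_rw [h2]
  rw [Finset.prod_ite_mem Finset.univ S fun j => μ j (sets j), Finset.univ_inter]
  refine Finset.prod_congr rfl fun j hj => ?_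
  rw [← pi_marginal μ j, Measure.map_apply (measurable_pi_apply j) (hsets j hj)]

lemma key_lemma (Ω : Type) [MeasureSpace Ω] [IsProbabilityMeasure (ℙ : Measure Ω)]
    (X₁ X₂ : Ω → ℝ) (h₁ : Measurable X₁) (h₂ : Measurable X₂)
    (hnn : ∀ᵐ ω ∂ℙ, 0 ≤ X₁ ω)
    (hid : Measure.map X₂ ℙ = Measure.map X₁ ℙ)
    (hindep : IndepFun X₁ X₂ ℙ)
    (hp1 : ℙ {ω | 0 ≤ X₁ ω ∧ X₁ ω ≤ 2} = ENNReal.ofReal 0.4)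
    (hp2 : ℙ {ω | 2 < X₁ ω ∧ X₁ ω ≤ 4} = ENNReal.ofReal 0.4) :
    ENNReal.ofReal 0.48 ≤ ℙ {ω | (X₁ ω + X₂ ω) / 2 ≤ 3} := by
  -- cdf of X₁ at 2
  have e2 : ℙ (X₁ ⁻¹' Set.Iic 2) = ENNReal.ofReal 0.4 := by
    rw [← hp1]
    apply measure_congr
    filter_upwards [hnn] with ω h0
    show (X₁ ω ≤ 2) = (0 ≤ X₁ ω ∧ X₁ ω ≤ 2)
    simp [h0]
  -- cdf of X₁ at 4
  have e4 : ℙ (X₁ ⁻¹' Set.Iic 4) = ENNReal.ofReal 0.8 := by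
    have hsplit : {ω | 0 ≤ X₁ ω ∧ X₁ ω ≤ 4}
        = {ω | 0 ≤ X₁ ω ∧ X₁ ω ≤ 2} ∪ {ω | 2 < X₁ ω ∧ X₁ ω ≤ 4} := by
      ext ω
      simp only [Set.mem_setOf_eq, Set.mem_union]
      constructor
      · rintro ⟨a, b⟩
        rcases le_or_gt (X₁ ω) 2 with h | h
        · exact Or.inl ⟨a, h⟩
        · exact Or.inr ⟨h, b⟩
      · rintro (⟨a, b⟩ | ⟨a, b⟩)
        · exact ⟨a, by linarith⟩
        · exact ⟨by linarith, b⟩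
    have hdisj : Disjoint {ω | 0 ≤ X₁ ω ∧ X₁ ω ≤ 2} {ω | 2 < X₁ ω ∧ X₁ ω ≤ 4} := by
      rw [Set.disjoint_left]
      rintro ω ⟨_, b⟩ ⟨c, _⟩
      linarith
    have hmeas2 : MeasurableSet {ω | 2 < X₁ ω ∧ X₁ ω ≤ 4} := by
      have : {ω | 2 < X₁ ω ∧ X₁ ω ≤ 4} = X₁ ⁻¹' Set.Ioc 2 4 := rfl
      rw [this]; exact h₁ measurableSet_Ioc
    have h04 : ℙ {ω | 0 ≤ X₁ ω ∧ X₁ ω ≤ 4} = ENNReal.ofReal 0.8 := by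
      rw [hsplit, measure_union hdisj hmeas2, hp1, hp2, ← ENNReal.ofReal_add (by norm_num)
        (by norm_num)]
      norm_num
    rw [← h04]
    apply measure_congr
    filter_upwards [hnn] with ω h0
    show (X₁ ω ≤ 4) = (0 ≤ X₁ ω ∧ X₁ ω ≤ 4)
    simp [h0]
  -- cdfs of X₂
  have e2' : ℙ (X₂ ⁻¹' Set.Iic 2) = ENNReal.ofReal 0.4 := by
    rw [← Measure.map_apply h₂ measurableSet_Iic, hid,
      Measure.map_apply h₁ measurableSet_Iic, e2]
  have e4' : ℙ (X₂ ⁻¹' Set.Iic 4) = ENNReal.ofReal 0.8 := by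
    rw [← Measure.map_apply h₂ measurableSet_Iic, hid,
      Measure.map_apply h₁ measurableSet_Iic, e4]
  -- joint probabilities
  have hA : ℙ (X₁ ⁻¹' Set.Iic 2 ∩ X₂ ⁻¹' Set.Iic 4) = ENNReal.ofReal 0.32 := by
    rw [hindep.measure_inter_preimage_eq_mul _ _ measurableSet_Iic measurableSet_Iic,
      e2, e4', ← ENNReal.ofReal_mul (by norm_num)]
    norm_num
  have hB : ℙ (X₁ ⁻¹' Set.Iic 4 ∩ X₂ ⁻¹' Set.Iic 2) = ENNReal.ofReal 0.32 := by
    rw [hindep.measure_inter_preimage_eq_mul _ _ measurableSet_Iic measurableSet_Iic,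
      e4, e2', ← ENNReal.ofReal_mul (by norm_num)]
    norm_num
  have hI : ℙ (X₁ ⁻¹' Set.Iic 2 ∩ X₂ ⁻¹' Set.Iic 2) = ENNReal.ofReal 0.16 := by
    rw [hindep.measure_inter_preimage_eq_mul _ _ measurableSet_Iic measurableSet_Iic,
      e2, e2', ← ENNReal.ofReal_mul (by norm_num)]
    norm_num
  have hABeq : (X₁ ⁻¹' Set.Iic 2 ∩ X₂ ⁻¹' Set.Iic 4) ∩ (X₁ ⁻¹' Set.Iic 4 ∩ X₂ ⁻¹' Set.Iic 2)
      = X₁ ⁻¹' Set.Iic 2 ∩ X₂ ⁻¹' Set.Iic 2 := by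
    ext ω
    simp only [Set.mem_inter_iff, Set.mem_preimage, Set.mem_Iic]
    constructor
    · rintro ⟨⟨a, _⟩, ⟨_, d⟩⟩; exact ⟨a, d⟩
    · rintro ⟨a, d⟩; exact ⟨⟨a, by linarith⟩, ⟨by linarith, d⟩⟩
  have hmeasB : MeasurableSet (X₁ ⁻¹' Set.Iic 4 ∩ X₂ ⁻¹' Set.Iic 2) :=
    (h₁ measurableSet_Iic).inter (h₂ measurableSet_Iic)
  have hunion := measure_union_add_inter (μ := ℙ)
    (X₁ ⁻¹' Set.Iic 2 ∩ X₂ ⁻¹' Set.Iic 4) hmeasB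
  rw [hABeq, hA, hB, hI] at hunion
  have hsub : (X₁ ⁻¹' Set.Iic 2 ∩ X₂ ⁻¹' Set.Iic 4) ∪ (X₁ ⁻¹' Set.Iic 4 ∩ X₂ ⁻¹' Set.Iic 2)
      ⊆ {ω | (X₁ ω + X₂ ω) / 2 ≤ 3} := by
    rintro ω (⟨a, b⟩ | ⟨a, b⟩) <;>
      simp only [Set.mem_preimage, Set.mem_Iic] at a b <;>
      simp only [Set.mem_setOf_eq] <;> linarith
  have hstep : ENNReal.ofReal 0.48 + ENNReal.ofReal 0.16
      ≤ ℙ {ω | (X₁ ω + X₂ ω) / 2 ≤ 3} + ENNReal.ofReal 0.16 := by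
    calc ENNReal.ofReal 0.48 + ENNReal.ofReal 0.16
        = ENNReal.ofReal 0.32 + ENNReal.ofReal 0.32 := by
          rw [← ENNReal.ofReal_add (by norm_num) (by norm_num),
            ← ENNReal.ofReal_add (by norm_num) (by norm_num)]
          norm_num
      _ = ℙ ((X₁ ⁻¹' Set.Iic 2 ∩ X₂ ⁻¹' Set.Iic 4) ∪ (X₁ ⁻¹' Set.Iic 4 ∩ X₂ ⁻¹' Set.Iic 2))
          + ENNReal.ofReal 0.16 := hunion.symm
      _ ≤ ℙ {ω | (X₁ ω + X₂ ω) / 2 ≤ 3} + ENNReal.ofReal 0.16 :=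
          add_le_add (measure_mono hsub) le_rfl
  exact (ENNReal.add_le_add_iff_right ENNReal.ofReal_ne_top).1 hstep

/-- If `X₁, X₂` are i.i.d. nonnegative real random variables with `P(0 ≤ X₁ ≤ 2) = 0.4`
and `P(2 < X₁ ≤ 4) = 0.4`, then `P((X₁ + X₂)/2 ≤ 3) ≥ 0.48`. Consequently, any
distribution `F` of a nonnegative random variable with `F 2 = 0.4`, `F 4 = 0.8` and
`F 3 < 0.48` does not belong to the class `D⁻`. -/
theorem stmt19 (Ω : Type) [MeasureSpace Ω] [IsProbabilityMeasure (ℙ : Measure Ω)]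
    (X₁ X₂ : Ω → ℝ) (h₁ : Measurable X₁) (h₂ : Measurable X₂)
    (hnn : ∀ᵐ ω ∂ℙ, 0 ≤ X₁ ω)
    (hid : Measure.map X₂ ℙ = Measure.map X₁ ℙ)
    (hindep : IndepFun X₁ X₂ ℙ)
    (hp1 : ℙ {ω | 0 ≤ X₁ ω ∧ X₁ ω ≤ 2} = ENNReal.ofReal 0.4)
    (hp2 : ℙ {ω | 2 < X₁ ω ∧ X₁ ω ≤ 4} = ENNReal.ofReal 0.4) :
    ENNReal.ofReal 0.48 ≤ ℙ {ω | (X₁ ω + X₂ ω) / 2 ≤ 3} ∧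
    ∀ (μ : Measure ℝ), IsProbabilityMeasure μ → μ (Set.Iio 0) = 0 →
      (μ (Set.Iic 2)).toReal = 0.4 → (μ (Set.Iic 4)).toReal = 0.8 →
      (μ (Set.Iic 3)).toReal < 0.48 → ¬ IsDNeg μ := by
  refine ⟨key_lemma Ω X₁ X₂ h₁ h₂ hnn hid hindep hp1 hp2, ?_⟩
  intro μ hprob h0 h2 h4 h3 hD
  letI : MeasureSpace (Fin 2 → ℝ) := ⟨Measure.pi fun _ => μ⟩
  haveI hP : IsProbabilityMeasure (ℙ : Measure (Fin 2 → ℝ)) := by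
    show IsProbabilityMeasure (Measure.pi fun _ => μ)
    infer_instance
  have hIic2 : μ (Set.Iic 2) = ENNReal.ofReal 0.4 := by
    rw [← h2, ENNReal.ofReal_toReal (measure_ne_top μ _)]
  have hIic4 : μ (Set.Iic 4) = ENNReal.ofReal 0.8 := by
    rw [← h4, ENNReal.ofReal_toReal (measure_ne_top μ _)]
  have hmap : ∀ i : Fin 2, Measure.map (fun ω : Fin 2 → ℝ => ω i) ℙ = μ :=
    fun i => pi_marginal (fun _ => μ) i
  have hind : iIndepFun
      (fun (i : Fin 2) (ω : Fin 2 → ℝ) => ω i) (ℙ : Measure (Fin 2 → ℝ)) :=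
    pi_eval_iIndep (fun _ => μ)
  -- apply IsDNeg
  have hDapp := hD 2 (fun _ => (1/2 : ℝ)) (fun _ => by norm_num)
    (by simp) (Fin 2 → ℝ) hP
    (fun i ω => ω i) (fun i => measurable_pi_apply i) hmap hind 3
  have hmeas_sum : Measurable (fun ω : Fin 2 → ℝ => ∑ i, (1/2 : ℝ) * ω i) := by
    apply Finset.measurable_sum
    exact fun i _ => (measurable_pi_apply i).const_mul _
  have hL : Measure.map (fun ω : Fin 2 → ℝ => ∑ i, (1/2 : ℝ) * ω i) ℙ (Set.Iic 3)
      = ℙ {ω : Fin 2 → ℝ | (ω 0 + ω 1) / 2 ≤ 3} := by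
    rw [Measure.map_apply hmeas_sum measurableSet_Iic]
    congr 1
    ext ω
    simp only [Set.mem_preimage, Set.mem_Iic, Set.mem_setOf_eq, Fin.sum_univ_two]
    constructor <;> intro h <;> linarith
  -- hypotheses of the key lemma for coordinates
  have hnn' : ∀ᵐ ω ∂(ℙ : Measure (Fin 2 → ℝ)), 0 ≤ ω 0 := by
    rw [ae_iff]
    have hset : {ω : Fin 2 → ℝ | ¬ 0 ≤ ω 0} = (fun ω : Fin 2 → ℝ => ω 0) ⁻¹' Set.Iio 0 := by
      ext ω; simp [not_le]
    rw [hset, ← Measure.map_apply (measurable_pi_apply 0) measurableSet_Iio, hmap 0]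
    exact h0
  have hid' : Measure.map (fun ω : Fin 2 → ℝ => ω 1) ℙ
      = Measure.map (fun ω : Fin 2 → ℝ => ω 0) ℙ := by
    rw [hmap 0, hmap 1]
  have hindep' : IndepFun (fun ω : Fin 2 → ℝ => ω 0) (fun ω : Fin 2 → ℝ => ω 1) ℙ :=
    hind.indepFun (show (0 : Fin 2) ≠ 1 by decide)
  have hIcc : μ (Set.Icc 0 2) = ENNReal.ofReal 0.4 := by
    rw [← hIic2]
    refine le_antisymm (measure_mono Set.Icc_subset_Iic_self) ?_
    calc μ (Set.Iic 2) ≤ μ (Set.Iio 0 ∪ Set.Icc 0 2) := by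
          apply measure_mono
          intro x hx
          simp only [Set.mem_Iic] at hx
          rcases lt_or_ge x 0 with h | h
          · exact Or.inl h
          · exact Or.inr ⟨h, hx⟩
      _ ≤ μ (Set.Iio 0) + μ (Set.Icc 0 2) := measure_union_le _ _
      _ = μ (Set.Icc 0 2) := by rw [h0, zero_add]
  have hp1' : ℙ {ω : Fin 2 → ℝ | 0 ≤ ω 0 ∧ ω 0 ≤ 2} = ENNReal.ofReal 0.4 := by
    have hset : {ω : Fin 2 → ℝ | 0 ≤ ω 0 ∧ ω 0 ≤ 2}
        = (fun ω : Fin 2 → ℝ => ω 0) ⁻¹' Set.Icc 0 2 := rfl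
    rw [hset, ← Measure.map_apply (measurable_pi_apply 0) measurableSet_Icc, hmap 0, hIcc]
  have hIoc : μ (Set.Ioc 2 4) = ENNReal.ofReal 0.4 := by
    have hsum : μ (Set.Iic 2) + μ (Set.Ioc 2 4) = μ (Set.Iic 4) := by
      rw [← measure_union (Set.Iic_disjoint_Ioc le_rfl) measurableSet_Ioc,
        Set.Iic_union_Ioc_eq_Iic (by norm_num : (2:ℝ) ≤ 4)]
    rw [hIic2, hIic4] at hsum
    have h08 : ENNReal.ofReal 0.8 = ENNReal.ofReal 0.4 + ENNReal.ofReal 0.4 := by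
      rw [← ENNReal.ofReal_add (by norm_num) (by norm_num)]; norm_num
    rw [h08] at hsum
    exact (ENNReal.add_right_inj ENNReal.ofReal_ne_top).1 hsum
  have hp2' : ℙ {ω : Fin 2 → ℝ | 2 < ω 0 ∧ ω 0 ≤ 4} = ENNReal.ofReal 0.4 := by
    have hset : {ω : Fin 2 → ℝ | 2 < ω 0 ∧ ω 0 ≤ 4}
        = (fun ω : Fin 2 → ℝ => ω 0) ⁻¹' Set.Ioc 2 4 := rfl
    rw [hset, ← Measure.map_apply (measurable_pi_apply 0) measurableSet_Ioc, hmap 0, hIoc]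
  have hkey := key_lemma (Fin 2 → ℝ) (fun ω => ω 0) (fun ω => ω 1)
    (measurable_pi_apply 0) (measurable_pi_apply 1) hnn' hid' hindep' hp1' hp2'
  have hlt : μ (Set.Iic 3) < ENNReal.ofReal 0.48 := by
    rw [← ENNReal.ofReal_toReal (measure_ne_top μ (Set.Iic 3))]
    exact (ENNReal.ofReal_lt_ofReal_iff (by norm_num)).2 h3
  have hle : ℙ {ω : Fin 2 → ℝ | (ω 0 + ω 1) / 2 ≤ 3} ≤ μ (Set.Iic 3) := hL ▸ hDapp
  exact absurd ((hkey.trans hle).trans_lt hlt) (lt_irrefl _)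
end
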